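/- arXiv:2503.01023 — 4 statements merged into one kernel-verified Lean document; each statement's English description precedes it below -/
import Mathlib

section
/- For every integer n ≥ 2, the number A(n) of n-noncrossing trees satisfies A(n) = Σ_{j=2}^{n} A_1(n+2−j)·A(j−1), where A_1(m) is the number of m-noncrossing trees in which vertex 1 has degree 1; moreover A(1) = 1. -/
/-- The noncrossing condition for a graph on the vertex set `ZMod n`
(vertex `j ∈ {1,…,n}` of the paper corresponds to `j - 1 : ZMod n`):
no two edges `{a,b}` and `{c,d}` satisfy `a < c < b < d`. -/
def Noncrossing {n : ℕ} (G : SimpleGraph (ZMod n)) : Prop :=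
  ∀ a b c d : ZMod n, G.Adj a b → G.Adj c d →
    ¬(a.val < c.val ∧ c.val < b.val ∧ b.val < d.val)

/-- An `n`-noncrossing tree: a tree on `n` vertices, drawn on the circle, with no crossing edges. -/
def IsNCTree {n : ℕ} (G : SimpleGraph (ZMod n)) : Prop :=
  G.IsTree ∧ Noncrossing G

/-- `A n` is the number of `n`-noncrossing trees. -/
noncomputable def A (n : ℕ) : ℕ :=
  Nat.card {G : SimpleGraph (ZMod n) // IsNCTree G}

/-- `A₁ n` is the number of `n`-noncrossing trees where vertex `1`
(i.e. `0 : ZMod n`) has degree `1`. -/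
noncomputable def A₁ (n : ℕ) : ℕ :=
  Nat.card {G : SimpleGraph (ZMod n) // IsNCTree G ∧ (G.neighborSet 0).ncard = 1}

/-!
Let `k` be the largest neighbour of the vertex `0` in a noncrossing tree on `ZMod n`. After
deleting the edge `0k`, the component of `k` is an arc `{t, …, n-1}`: a path leaving it would
have to cross the edge `0k` or an edge of the other component. So the tree is the wedge, at `0`,
of a noncrossing tree on `{0, …, t-1}` and a noncrossing tree on `{0} ∪ {t, …, n-1}` in which
`0` is a leaf, and `t ∈ {1, …, n-1}` is determined by the tree. Conversely, every such pair of
trees glues to a noncrossing tree, so counting the trees by `t = j - 1` gives the recurrence.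
-/

open Set Function

namespace SimpleGraph

variable {V W V₁ V₂ : Type*}

theorem Reachable.map_of_adj_reachable {G : SimpleGraph V} {H : SimpleGraph W} (r : V → W)
    (hr : ∀ ⦃a b⦄, G.Adj a b → H.Reachable (r a) (r b)) {u v : V} (h : G.Reachable u v) :
    H.Reachable (r u) (r v) := by
  rw [reachable_iff_reflTransGen] at h ⊢
  exact h.lift' r fun a b hab => (reachable_iff_reflTransGen _ _).mp (hr hab)

theorem ncard_neighborSet_comap (G : SimpleGraph V) (f : W ↪ V) (x : W) :
    ((G.comap f).neighborSet x).ncard = (G.neighborSet (f x) ∩ range f).ncard := by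
  rw [neighborSet_comap, ← preimage_inter_range,
    ncard_preimage_of_injective_subset_range f.injective inter_subset_right]

def IsSplitBy (G : SimpleGraph V) (s₁ s₂ : Set V) : Prop :=
  ∀ ⦃a b⦄, G.Adj a b → a ∈ s₁ ∧ b ∈ s₁ ∨ a ∈ s₂ ∧ b ∈ s₂

section Wedge

variable {G : SimpleGraph V} {f : V₁ ↪ V} {g : V₂ ↪ V}

theorem IsSplitBy.symm {s₁ s₂ : Set V} (h : G.IsSplitBy s₁ s₂) : G.IsSplitBy s₂ s₁ :=
  fun _ _ hab => (h hab).symm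

theorem isSplitBy_map_sup_map (T₁ : SimpleGraph V₁) (T₂ : SimpleGraph V₂) :
    (T₁.map f ⊔ T₂.map g).IsSplitBy (range f) (range g) := by
  intro _ _ h
  simp only [sup_adj, map_adj] at h
  rcases h with ⟨a, b, -, rfl, rfl⟩ | ⟨a, b, -, rfl, rfl⟩
  · exact Or.inl ⟨mem_range_self a, mem_range_self b⟩
  · exact Or.inr ⟨mem_range_self a, mem_range_self b⟩

theorem IsSplitBy.map_comap_sup_map_comap (h : G.IsSplitBy (range f) (range g)) :
    (G.comap f).map f ⊔ (G.comap g).map g = G := by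
  refine le_antisymm (sup_le (map_comap_le f G) (map_comap_le g G)) fun a b hab => ?_
  rcases h hab with ⟨⟨a, rfl⟩, ⟨b, rfl⟩⟩ | ⟨⟨a, rfl⟩, ⟨b, rfl⟩⟩
  · exact Or.inl (map_adj_apply.mpr hab)
  · exact Or.inr (map_adj_apply.mpr hab)

theorem comap_map_sup_map (hfg : (range f ∩ range g).Subsingleton)
    (T₁ : SimpleGraph V₁) (T₂ : SimpleGraph V₂) : (T₁.map f ⊔ T₂.map g).comap f = T₁ := by
  ext x y
  rw [comap_adj, sup_adj, map_adj_apply, or_iff_left_iff_imp, map_adj]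
  rintro ⟨a, b, hab, hx, hy⟩
  have : f x = f y := hfg ⟨mem_range_self x, a, hx⟩ ⟨mem_range_self y, b, hy⟩
  rw [← hx, ← hy] at this
  exact absurd (g.injective this) hab.ne

theorem IsSplitBy.connected_comap {x₀ : V₁} (h : G.IsSplitBy (range f) (range g))
    (hfg : range f ∩ range g ⊆ {f x₀}) (hG : G.Connected) : (G.comap f).Connected := by
  classical
  have : Nonempty V₁ := ⟨x₀⟩
  let r : V → V₁ := fun v => if v ∈ range f then invFun f v else x₀
  have hr : ∀ x, r (f x) = x := fun x => by
    simp only [r, mem_range_self, if_true, leftInverse_invFun f.injective x]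
  have hrg : ∀ v ∈ range g, r v = x₀ := fun v hv => by
    by_cases hvf : v ∈ range f
    · rw [hfg ⟨hvf, hv⟩, hr]
    · simp only [r, hvf, if_false]
  refine ⟨fun x y => ?_⟩
  have := (hG.preconnected (f x) (f y)).map_of_adj_reachable (H := G.comap f) r
    fun a b hab => ?_
  · rwa [hr, hr] at this
  rcases h hab with ⟨⟨a, rfl⟩, ⟨b, rfl⟩⟩ | ⟨ha, hb⟩
  · rw [hr, hr]
    exact Adj.reachable hab
  · rw [hrg a ha, hrg b hb]

theorem IsSplitBy.card_edgeSet [Finite V] (h : G.IsSplitBy (range f) (range g))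
    (hfg : (range f ∩ range g).Subsingleton) :
    Nat.card G.edgeSet = Nat.card (G.comap f).edgeSet + Nat.card (G.comap g).edgeSet := by
  have hdisj : Disjoint ((G.comap f).map f).edgeSet ((G.comap g).map g).edgeSet := by
    refine Set.disjoint_left.mpr fun e he₁ he₂ => ?_
    induction e using Sym2.ind with | h a b => ?_
    obtain ⟨x, y, hxy, rfl, rfl⟩ := (map_adj f _ _ _).mp he₁
    obtain ⟨u, v, -, hu, hv⟩ := (map_adj g _ _ _).mp he₂
    exact hxy.ne (f.injective (hfg ⟨mem_range_self x, u, hu⟩ ⟨mem_range_self y, v, hv⟩))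
  conv_lhs => rw [← h.map_comap_sup_map_comap]
  rw [Nat.card_coe_set_eq, edgeSet_sup, ncard_union_eq hdisj, edgeSet_map, edgeSet_map,
    ncard_image_of_injective _ f.sym2Map.injective,
    ncard_image_of_injective _ g.sym2Map.injective, Nat.card_coe_set_eq, Nat.card_coe_set_eq]

theorem IsSplitBy.isTree_iff [Finite V] {p : V} (h : G.IsSplitBy (range f) (range g))
    (hcover : range f ∪ range g = univ) (hfg : range f ∩ range g = {p}) :
    G.IsTree ↔ (G.comap f).IsTree ∧ (G.comap g).IsTree := by
  obtain ⟨⟨x₀, rfl⟩, y₀, hy₀⟩ : p ∈ range f ∩ range g := hfg ▸ mem_singleton p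
  constructor
  · intro hG
    have hgf : range g ∩ range f ⊆ {g y₀} := by rw [inter_comm, hfg, hy₀]
    exact ⟨⟨h.connected_comap hfg.le hG.connected, hG.isAcyclic.of_comap f⟩,
      ⟨h.symm.connected_comap hgf hG.connected, hG.isAcyclic.of_comap g⟩⟩
  · rintro ⟨h₁, h₂⟩
    have : Nonempty V := ⟨f x₀⟩
    have hreach : ∀ v, G.Reachable v (f x₀) := fun v => by
      rcases hcover ▸ mem_univ v with ⟨x, rfl⟩ | ⟨y, rfl⟩
      · exact (h₁.connected.preconnected x x₀).map (Embedding.comap f G).toHom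
      · rw [← hy₀]
        exact (h₂.connected.preconnected y y₀).map (Embedding.comap g G).toHom
    -- Trees are the connected graphs with one edge fewer than vertices; the two pieces have
    -- `|V| + 1` vertices and as many edges as `G` in total.
    have hcard := ncard_union_add_ncard_inter (range f) (range g)
    rw [hcover, hfg, ncard_univ, ncard_singleton, ncard_range_of_injective f.injective,
      ncard_range_of_injective g.injective] at hcard
    have := Finite.of_injective f f.injective
    have := Finite.of_injective g g.injective
    rw [isTree_iff_connected_and_card] at h₁ h₂ ⊢
    refine ⟨⟨fun u v => (hreach u).trans (hreach v).symm⟩, ?_⟩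
    rw [h.card_edgeSet (hfg ▸ subsingleton_singleton)]
    omega

end Wedge

section EdgeSide

variable {G : SimpleGraph V} {u v x y : V}

def edgeSide (G : SimpleGraph V) (u v : V) : Set V :=
  {w | (G.deleteEdges {s(u, v)}).Reachable w v}

theorem mem_edgeSide_self : v ∈ G.edgeSide u v := Reachable.refl v

theorem notMem_edgeSide (hG : G.IsAcyclic) (huv : G.Adj u v) : u ∉ G.edgeSide u v :=
  isBridge_iff.mp (isAcyclic_iff_forall_adj_isBridge.mp hG huv)

theorem mem_edgeSide_iff_of_adj (hxy : G.Adj x y) (hne : s(x, y) ≠ s(u, v)) :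
    x ∈ G.edgeSide u v ↔ y ∈ G.edgeSide u v := by
  have : (G.deleteEdges {s(u, v)}).Adj x y := (deleteEdges_adj ..).mpr ⟨hxy, hne⟩
  exact ⟨this.symm.reachable.trans, this.reachable.trans⟩

theorem mem_edgeSide_of_mem_support {w : V} {p : (G.deleteEdges {s(u, v)}).Walk w v}
    (hx : x ∈ p.support) : x ∈ G.edgeSide u v := by
  classical
  exact (p.dropUntil x hx).reachable

theorem Connected.exists_adj_of_notMem_edgeSide (hG : G.Connected) (P : V → Prop) {w : V}
    (hw : w ∉ G.edgeSide u v) (hPw : P w) (hPu : ¬P u) (hPv : ¬P v) :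
    ∃ x y, G.Adj x y ∧ x ∉ G.edgeSide u v ∧ y ∉ G.edgeSide u v ∧ P x ∧ ¬P y := by
  obtain ⟨p⟩ := hG.preconnected w u
  obtain ⟨d, -, ⟨hPx, hx⟩, hy⟩ :=
    p.exists_boundary_dart {x | P x ∧ x ∉ G.edgeSide u v} ⟨hPw, hw⟩ fun h => hPu h.1
  have hne : s(d.fst, d.snd) ≠ s(u, v) := by
    rintro h
    rcases Sym2.eq_iff.mp h with ⟨h, -⟩ | ⟨h, -⟩
    · exact hPu (h ▸ hPx)
    · exact hPv (h ▸ hPx)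
  have hy' : d.snd ∉ G.edgeSide u v := (mem_edgeSide_iff_of_adj d.adj hne).not.mp hx
  exact ⟨d.fst, d.snd, d.adj, hx, hy', hPx, fun h => hy ⟨h, hy'⟩⟩

end EdgeSide

end SimpleGraph

open SimpleGraph

theorem Nat.card_eq_sum_card_of_existsUnique {α ι : Type*} [Finite α] (s : Finset ι)
    (P : ι → α → Prop) (h : ∀ a, ∃! i, i ∈ s ∧ P i a) :
    Nat.card α = ∑ i ∈ s, Nat.card {a // P i a} := by
  let f : α → s := fun a => ⟨(h a).exists.choose, (h a).exists.choose_spec.1⟩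
  have hf : ∀ i a, f a = i ↔ P i a := fun i a =>
    ⟨fun hi => hi ▸ (h a).exists.choose_spec.2,
      fun hi => Subtype.ext ((h a).unique (h a).exists.choose_spec ⟨i.2, hi⟩)⟩
  rw [← Nat.card_congr (Equiv.sigmaFiberEquiv f), Nat.card_sigma, ← Finset.sum_coe_sort s]
  exact Finset.sum_congr rfl fun i _ => Nat.card_congr (Equiv.subtypeEquivRight (hf i))

section Arcs

variable {n t m : ℕ}

def lowerArc (t : ℕ) : Set (ZMod n) := {a | a.val < t}

def upperArc (t : ℕ) : Set (ZMod n) := {a | a = 0 ∨ t ≤ a.val}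

def SplitAt (G : SimpleGraph (ZMod n)) (t : ℕ) : Prop :=
  G.IsSplitBy (lowerArc t) (upperArc t) ∧ (G.neighborSet 0 ∩ upperArc t).ncard = 1

theorem Noncrossing.comap {G : SimpleGraph (ZMod n)} {f : ZMod m → ZMod n}
    (hf : ∀ x y, x.val < y.val → (f x).val < (f y).val) (h : Noncrossing G) :
    Noncrossing (G.comap f) :=
  fun _ _ _ _ hab hcd ⟨h₁, h₂, h₃⟩ => h _ _ _ _ hab hcd ⟨hf _ _ h₁, hf _ _ h₂, hf _ _ h₃⟩

theorem lowerArc_union_upperArc : lowerArc t ∪ upperArc t = (univ : Set (ZMod n)) := by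
  ext a
  simp only [lowerArc, upperArc, mem_union, mem_ofPred_eq, mem_univ, iff_true]
  omega

theorem lowerArc_inter_upperArc [NeZero t] :
    lowerArc t ∩ upperArc t = ({0} : Set (ZMod n)) := by
  ext a
  have := NeZero.pos t
  simp only [lowerArc, upperArc, mem_inter_iff, mem_ofPred_eq, mem_singleton_iff]
  constructor
  · rintro ⟨h, rfl | h'⟩ <;> first | rfl | omega
  · rintro rfl
    simp [this]

variable [NeZero t] [NeZero m]

def lowerEmb (htm : t + m = n + 1) : ZMod t ↪ ZMod n where
  toFun x := (x.val : ZMod n)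
  inj' x y h := by
    have hx : x.val < n := by have := x.val_lt; have := NeZero.pos m; omega
    have hy : y.val < n := by have := y.val_lt; have := NeZero.pos m; omega
    have := congrArg ZMod.val h
    rw [ZMod.val_cast_of_lt hx, ZMod.val_cast_of_lt hy] at this
    exact ZMod.val_injective t this

theorem val_lowerEmb (htm : t + m = n + 1) (x : ZMod t) : (lowerEmb htm x).val = x.val :=
  ZMod.val_cast_of_lt (by have := x.val_lt; have := NeZero.pos m; omega)

theorem range_lowerEmb [NeZero n] (htm : t + m = n + 1) :
    range (lowerEmb htm) = lowerArc t := by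
  ext a
  refine ⟨?_, fun ha => ⟨(a.val : ZMod t), ZMod.val_injective n ?_⟩⟩
  · rintro ⟨x, rfl⟩
    exact (val_lowerEmb htm x).trans_lt x.val_lt
  · rw [val_lowerEmb, ZMod.val_cast_of_lt ha]

theorem val_natCast_val_add_sub_one (htm : t + m = n + 1) (y : ZMod m) :
    ((y.val + t - 1 : ℕ) : ZMod n).val = y.val + t - 1 :=
  ZMod.val_cast_of_lt (by have := y.val_lt; have := NeZero.pos t; omega)

def upperEmb (htm : t + m = n + 1) : ZMod m ↪ ZMod n where
  toFun y := if y = 0 then 0 else ((y.val + t - 1 : ℕ) : ZMod n)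
  inj' x y h := by
    have := NeZero.pos t
    have hv := congrArg ZMod.val h
    simp only at hv
    split_ifs at hv with hx hy hy
    · rw [hx, hy]
    · rw [val_natCast_val_add_sub_one htm, ZMod.val_zero] at hv
      have := ZMod.val_pos.mpr hy
      omega
    · rw [val_natCast_val_add_sub_one htm, ZMod.val_zero] at hv
      have := ZMod.val_pos.mpr hx
      omega
    · rw [val_natCast_val_add_sub_one htm, val_natCast_val_add_sub_one htm] at hv
      have := ZMod.val_pos.mpr hx
      exact ZMod.val_injective m (by omega)

theorem upperEmb_apply (htm : t + m = n + 1) (y : ZMod m) :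
    upperEmb htm y = if y = 0 then 0 else ((y.val + t - 1 : ℕ) : ZMod n) := rfl

theorem upperEmb_zero (htm : t + m = n + 1) : upperEmb htm 0 = (0 : ZMod n) := if_pos rfl

theorem val_upperEmb (htm : t + m = n + 1) {y : ZMod m} (hy : y ≠ 0) :
    (upperEmb htm y).val = y.val + t - 1 := by
  rw [upperEmb_apply, if_neg hy, val_natCast_val_add_sub_one htm]

theorem val_upperEmb_lt_iff (htm : t + m = n + 1) {x y : ZMod m} :
    (upperEmb htm x).val < (upperEmb htm y).val ↔ x.val < y.val := by
  have := NeZero.pos t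
  rcases eq_or_ne x 0 with rfl | hx <;> rcases eq_or_ne y 0 with rfl | hy
  · simp
  · rw [upperEmb_zero, val_upperEmb htm hy, ZMod.val_zero, ZMod.val_zero]
    have := ZMod.val_pos.mpr hy
    omega
  · rw [upperEmb_zero, val_upperEmb htm hx, ZMod.val_zero, ZMod.val_zero]
    omega
  · rw [val_upperEmb htm hx, val_upperEmb htm hy]
    have := ZMod.val_pos.mpr hx
    omega

theorem range_upperEmb [NeZero n] (htm : t + m = n + 1) :
    range (upperEmb htm) = upperArc t := by
  ext a
  constructor
  · rintro ⟨y, rfl⟩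
    rcases eq_or_ne y 0 with rfl | hy
    · exact Or.inl (upperEmb_zero htm)
    · exact Or.inr (by rw [val_upperEmb htm hy]; have := ZMod.val_pos.mpr hy; omega)
  · rintro (rfl | ha)
    · exact ⟨0, upperEmb_zero htm⟩
    have hval : ((a.val + 1 - t : ℕ) : ZMod m).val = a.val + 1 - t :=
      ZMod.val_cast_of_lt (by have := a.val_lt; omega)
    have hne : ((a.val + 1 - t : ℕ) : ZMod m) ≠ 0 := fun h => by
      rw [h, ZMod.val_zero] at hval
      omega
    refine ⟨((a.val + 1 - t : ℕ) : ZMod m), ZMod.val_injective n ?_⟩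
    rw [val_upperEmb htm hne, hval]
    omega

end Arcs

section Decomposition

variable {n t m : ℕ} [NeZero n] [NeZero t] [NeZero m] {G : SimpleGraph (ZMod n)}

theorem noncrossing_iff_of_isSplitBy (htm : t + m = n + 1)
    (hG : G.IsSplitBy (lowerArc t) (upperArc t)) :
    Noncrossing G ↔
      Noncrossing (G.comap (lowerEmb htm)) ∧ Noncrossing (G.comap (upperEmb htm)) := by
  refine ⟨fun h => ⟨h.comap fun x y hxy => by rwa [val_lowerEmb, val_lowerEmb],
    h.comap fun x y => (val_upperEmb_lt_iff htm).mpr⟩, fun ⟨h₁, h₂⟩ a b c d hab hcd hcross => ?_⟩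
  rcases hG hab with ⟨ha, hb⟩ | ⟨ha, hb⟩ <;> rcases hG hcd with ⟨hc, hd⟩ | ⟨hc, hd⟩
  · rw [← range_lowerEmb htm] at ha hb hc hd
    obtain ⟨⟨a, rfl⟩, ⟨b, rfl⟩, ⟨c, rfl⟩, ⟨d, rfl⟩⟩ := (⟨ha, hb, hc, hd⟩ : _ ∧ _ ∧ _ ∧ _)
    simp only [val_lowerEmb] at hcross
    exact h₁ a b c d hab hcd hcross
  · rcases hc with rfl | hc
    · simp at hcross
    · exact absurd hb (by simp only [lowerArc, mem_ofPred_eq]; omega)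
  · rcases hb with rfl | hb
    · simp at hcross
    · exact absurd hd (by simp only [lowerArc, mem_ofPred_eq]; omega)
  · rw [← range_upperEmb htm] at ha hb hc hd
    obtain ⟨⟨a, rfl⟩, ⟨b, rfl⟩, ⟨c, rfl⟩, ⟨d, rfl⟩⟩ := (⟨ha, hb, hc, hd⟩ : _ ∧ _ ∧ _ ∧ _)
    simp only [val_upperEmb_lt_iff] at hcross
    exact h₂ a b c d hab hcd hcross

theorem isNCTree_iff_of_isSplitBy (htm : t + m = n + 1)
    (hG : G.IsSplitBy (lowerArc t) (upperArc t)) :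
    IsNCTree G ↔ IsNCTree (G.comap (lowerEmb htm)) ∧ IsNCTree (G.comap (upperEmb htm)) := by
  have hG' := hG
  rw [← range_lowerEmb htm, ← range_upperEmb htm] at hG'
  rw [IsNCTree, IsNCTree, IsNCTree, noncrossing_iff_of_isSplitBy htm hG,
    hG'.isTree_iff (p := 0) (by rw [range_lowerEmb, range_upperEmb, lowerArc_union_upperArc])
      (by rw [range_lowerEmb, range_upperEmb, lowerArc_inter_upperArc])]
  tauto

theorem splitAt_iff (htm : t + m = n + 1) :
    SplitAt G t ↔ G.IsSplitBy (lowerArc t) (upperArc t) ∧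
      ((G.comap (upperEmb htm)).neighborSet 0).ncard = 1 := by
  rw [SplitAt, ncard_neighborSet_comap, upperEmb_zero, range_upperEmb]

theorem comap_lowerEmb_map_sup_map (htm : t + m = n + 1) (T₁ : SimpleGraph (ZMod t))
    (T₂ : SimpleGraph (ZMod m)) :
    (T₁.map (lowerEmb htm) ⊔ T₂.map (upperEmb htm)).comap (lowerEmb htm) = T₁ := by
  refine comap_map_sup_map ?_ T₁ T₂
  rw [range_lowerEmb, range_upperEmb, lowerArc_inter_upperArc]
  exact subsingleton_singleton

theorem comap_upperEmb_map_sup_map (htm : t + m = n + 1) (T₁ : SimpleGraph (ZMod t))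
    (T₂ : SimpleGraph (ZMod m)) :
    (T₁.map (lowerEmb htm) ⊔ T₂.map (upperEmb htm)).comap (upperEmb htm) = T₂ := by
  rw [sup_comm]
  refine comap_map_sup_map ?_ T₂ T₁
  rw [range_lowerEmb, range_upperEmb, inter_comm, lowerArc_inter_upperArc]
  exact subsingleton_singleton

def splitAtEquiv (htm : t + m = n + 1) :
    {G : SimpleGraph (ZMod n) // IsNCTree G ∧ SplitAt G t} ≃
      {T : SimpleGraph (ZMod m) // IsNCTree T ∧ (T.neighborSet 0).ncard = 1} ×
        {T : SimpleGraph (ZMod t) // IsNCTree T} where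
  toFun G :=
    have hsplit := (splitAt_iff htm).mp G.2.2
    have htree := (isNCTree_iff_of_isSplitBy htm hsplit.1).mp G.2.1
    (⟨G.1.comap (upperEmb htm), htree.2, hsplit.2⟩, ⟨G.1.comap (lowerEmb htm), htree.1⟩)
  invFun T := by
    refine ⟨T.2.1.map (lowerEmb htm) ⊔ T.1.1.map (upperEmb htm), ?_⟩
    have hsplit := isSplitBy_map_sup_map (f := lowerEmb htm) (g := upperEmb htm) T.2.1 T.1.1
    rw [range_lowerEmb, range_upperEmb] at hsplit
    rw [splitAt_iff htm, isNCTree_iff_of_isSplitBy htm hsplit, comap_lowerEmb_map_sup_map,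
      comap_upperEmb_map_sup_map]
    exact ⟨⟨T.2.2, T.1.2.1⟩, hsplit, T.1.2.2⟩
  left_inv G := by
    have hsplit := ((splitAt_iff htm).mp G.2.2).1
    rw [← range_lowerEmb htm, ← range_upperEmb htm] at hsplit
    exact Subtype.ext hsplit.map_comap_sup_map_comap
  right_inv T := Prod.ext (Subtype.ext (comap_upperEmb_map_sup_map htm _ _))
    (Subtype.ext (comap_lowerEmb_map_sup_map htm _ _))

theorem card_splitAt (htm : t + m = n + 1) :
    Nat.card {G : SimpleGraph (ZMod n) // IsNCTree G ∧ SplitAt G t} = A₁ m * A t := by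
  rw [Nat.card_congr (splitAtEquiv htm), Nat.card_prod, A₁, A]

end Decomposition

section SplitPoint

variable {n : ℕ} [NeZero n] {G : SimpleGraph (ZMod n)}

theorem Noncrossing.mem_support_of_walk {a b u w : ZMod n} (h : Noncrossing G) (hab : G.Adj a b)
    (p : G.Walk u w) (hu : a.val < u.val ∧ u.val < b.val)
    (hw : ¬(a.val < w.val ∧ w.val < b.val)) : a ∈ p.support ∨ b ∈ p.support := by
  obtain ⟨d, hd, ⟨hax, hxb⟩, hy⟩ :=
    p.exists_boundary_dart {v | a.val < v.val ∧ v.val < b.val} hu hw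
  have hyp := p.dart_snd_mem_support_of_mem_darts hd
  by_cases hya : d.snd = a
  · exact Or.inl (hya ▸ hyp)
  by_cases hyb : d.snd = b
  · exact Or.inr (hyb ▸ hyp)
  have hya' : d.snd.val ≠ a.val := fun e => hya (ZMod.val_injective n e)
  have hyb' : d.snd.val ≠ b.val := fun e => hyb (ZMod.val_injective n e)
  simp only [mem_ofPred_eq, not_and, not_lt] at hy
  by_cases hlt : d.snd.val < a.val
  · exact (h _ _ _ _ d.adj.symm hab ⟨hlt, hax, hxb⟩).elim
  · exact (h _ _ _ _ hab d.adj ⟨hax, hxb, by have := hy (by omega); omega⟩).elim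

theorem mem_edgeSide_of_val_lt {k w : ZMod n} (hnc : Noncrossing G) (hconn : G.Connected)
    (hk : G.Adj 0 k) (hkmax : ∀ v, G.Adj 0 v → v.val ≤ k.val) (hw : k.val < w.val) :
    w ∈ G.edgeSide 0 k := by
  by_contra hwS
  obtain ⟨x, y, hxy, -, hy, hkx, hky⟩ := hconn.exists_adj_of_notMem_edgeSide
    (fun x => k.val < x.val) hwS hw (by simp) (lt_irrefl _)
  have hyk : y.val < k.val := lt_of_le_of_ne (not_lt.mp hky)
    fun h => hy (ZMod.val_injective n h ▸ mem_edgeSide_self)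
  rcases eq_or_ne y 0 with rfl | hy0
  · exact absurd (hkmax x hxy.symm) (not_le.mpr hkx)
  · exact hnc 0 k y x hk hxy.symm ⟨by simpa using ZMod.val_pos.mpr hy0, hyk, hkx⟩

theorem mem_edgeSide_of_val_lt_of_mem {k v w : ZMod n} (hnc : Noncrossing G)
    (hconn : G.Connected) (hk : G.Adj 0 k) (hkmax : ∀ v, G.Adj 0 v → v.val ≤ k.val)
    (hv : v ∈ G.edgeSide 0 k) (hvw : v.val < w.val) (hwk : w.val < k.val) :
    w ∈ G.edgeSide 0 k := by
  by_contra hwS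
  obtain ⟨x, y, hxy, hx, hy, ⟨hvx, hxk⟩, hvyk⟩ := hconn.exists_adj_of_notMem_edgeSide
    (fun x => v.val < x.val ∧ x.val < k.val) hwS ⟨hvw, hwk⟩ (by simp) fun h => lt_irrefl _ h.2
  have hyv : y.val < v.val := by
    by_contra! hvy
    rcases hvy.lt_or_eq with hvy | hvy
    · rcases (not_lt.mp fun h => hvyk ⟨hvy, h⟩).lt_or_eq with hky | hky
      · exact hy (mem_edgeSide_of_val_lt hnc hconn hk hkmax hky)
      · exact hy (ZMod.val_injective n hky ▸ mem_edgeSide_self)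
    · exact hy (ZMod.val_injective n hvy ▸ hv)
  -- The edge `yx` separates `v` from `k`, but `v` reaches `k` without leaving the side of `k`.
  obtain ⟨q⟩ := hv
  rcases hnc.mem_support_of_walk hxy.symm (q.mapLe (deleteEdges_le _)) ⟨hyv, hvx⟩ (by omega)
    with h | h <;> rw [Walk.support_mapLe_eq_support] at h
  · exact hy (mem_edgeSide_of_mem_support h)
  · exact hx (mem_edgeSide_of_mem_support h)

theorem mem_edgeSide_of_mem_of_val_le {k v w : ZMod n} (hnc : Noncrossing G)
    (hconn : G.Connected) (hk : G.Adj 0 k) (hkmax : ∀ v, G.Adj 0 v → v.val ≤ k.val)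
    (hv : v ∈ G.edgeSide 0 k) (hvw : v.val ≤ w.val) : w ∈ G.edgeSide 0 k := by
  rcases lt_trichotomy w.val k.val with hwk | hwk | hwk
  · rcases hvw.lt_or_eq with hvw | hvw
    · exact mem_edgeSide_of_val_lt_of_mem hnc hconn hk hkmax hv hvw hwk
    · exact ZMod.val_injective n hvw ▸ hv
  · exact ZMod.val_injective n hwk ▸ mem_edgeSide_self
  · exact mem_edgeSide_of_val_lt hnc hconn hk hkmax hwk

theorem exists_adj_zero_forall_adj_zero_val_le [Nontrivial (ZMod n)] (hconn : G.Connected) :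
    ∃ k, G.Adj 0 k ∧ ∀ v, G.Adj 0 v → v.val ≤ k.val := by
  classical
  obtain ⟨v, hv⟩ := hconn.preconnected.exists_adj_of_nontrivial 0
  obtain ⟨k, hk, hkmax⟩ :=
    Finset.exists_max_image (Finset.univ.filter (G.Adj 0)) ZMod.val ⟨v, by simpa using hv⟩
  exact ⟨k, by simpa using hk, fun v hv => hkmax v (by simpa using hv)⟩

theorem exists_splitAt [Nontrivial (ZMod n)] (hG : IsNCTree G) :
    ∃ t ∈ Finset.Icc 1 (n - 1), SplitAt G t := by
  have hconn := hG.1.connected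
  obtain ⟨k, hk, hkmax⟩ := exists_adj_zero_forall_adj_zero_val_le hconn
  obtain ⟨a, haS, hmin⟩ := (G.edgeSide 0 k).exists_min_image ZMod.val (toFinite _)
    ⟨k, mem_edgeSide_self⟩
  have hS : ∀ v, v ∈ G.edgeSide 0 k ↔ a.val ≤ v.val := fun v => ⟨hmin v,
    fun hav => mem_edgeSide_of_mem_of_val_le hG.2 hconn hk hkmax haS hav⟩
  have h0 := notMem_edgeSide hG.1.isAcyclic hk
  refine ⟨a.val, Finset.mem_Icc.mpr ⟨?_, ?_⟩, fun x y hxy => ?_, ?_⟩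
  · exact ZMod.val_pos.mpr fun h => h0 (h ▸ haS)
  · have := a.val_lt
    omega
  · by_cases he : s(x, y) = s(0, k)
    · have hk' := (hS k).mp mem_edgeSide_self
      rcases Sym2.eq_iff.mp he with ⟨rfl, rfl⟩ | ⟨rfl, rfl⟩
      · exact Or.inr ⟨Or.inl rfl, Or.inr hk'⟩
      · exact Or.inr ⟨Or.inr hk', Or.inl rfl⟩
    · have hxy' := mem_edgeSide_iff_of_adj hxy he
      rw [hS, hS] at hxy'
      by_cases hx : a.val ≤ x.val
      · exact Or.inr ⟨Or.inr hx, Or.inr (hxy'.mp hx)⟩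
      · exact Or.inl ⟨not_le.mp hx, not_le.mp (hxy'.not.mp hx)⟩
  · refine ncard_eq_one.mpr ⟨k, eq_singleton_iff_unique_mem.mpr
      ⟨⟨hk, Or.inr (hmin k mem_edgeSide_self)⟩, ?_⟩⟩
    rintro w ⟨hw, rfl | hwa⟩
    · exact absurd hw G.irrefl
    by_contra hwk
    refine h0 ((mem_edgeSide_iff_of_adj hw ?_).mpr ((hS w).mpr hwa))
    rw [Ne, Sym2.eq_iff]
    rintro (⟨-, h⟩ | ⟨h, -⟩)
    · exact hwk h
    · exact hk.ne h

theorem SplitAt.le_of_splitAt {t t' : ℕ} (hG : G.Connected) (ht : 1 ≤ t) (h : SplitAt G t)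
    (h' : SplitAt G t') : t' ≤ t := by
  by_contra! htt'
  obtain ⟨w', hw'N, hw'⟩ := nonempty_of_ncard_ne_zero (h'.2 ▸ one_ne_zero)
  have hw't' : t' ≤ w'.val := hw'.resolve_left fun h0 => G.irrefl (h0 ▸ hw'N)
  have htn : t < n := by have := w'.val_lt; omega
  obtain ⟨p⟩ := hG.preconnected (t : ZMod n) 0
  obtain ⟨d, -, ⟨hxt, hxt'⟩, hy⟩ := p.exists_boundary_dart {v | t ≤ v.val ∧ v.val < t'}
    (by simp [ZMod.val_cast_of_lt htn, htt']) (by simp; omega)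
  have hy0 : d.snd = 0 := by
    rcases h.1 d.adj with ⟨hx, -⟩ | ⟨-, hy0 | hyt⟩
    · exact absurd hx (by simp [lowerArc]; omega)
    · exact hy0
    rcases h'.1 d.adj with ⟨-, hyt'⟩ | ⟨hx0 | hx, -⟩
    · exact absurd ⟨hyt, hyt'⟩ hy
    · exact absurd hxt (by simp [hx0]; omega)
    · omega
  have := (ncard_le_one_iff).mp h.2.le ⟨hy0 ▸ d.adj.symm, Or.inr hxt⟩
    ⟨hw'N, Or.inr (by omega)⟩
  rw [this] at hxt'
  omega

end SplitPoint

theorem A_one : A 1 = 1 :=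
  Nat.card_eq_one_iff_unique.mpr
    ⟨inferInstance, ⟨⟨⊥, .of_subsingleton, fun _ _ _ _ h => h.elim⟩⟩⟩

theorem A_eq_sum {n : ℕ} (hn : 2 ≤ n) :
    A n = ∑ t ∈ Finset.Icc 1 (n - 1), A₁ (n + 1 - t) * A t := by
  have : NeZero n := ⟨by omega⟩
  have : Fact (1 < n) := ⟨hn⟩
  rw [A, Nat.card_eq_sum_card_of_existsUnique _ (fun t G => SplitAt G.1 t) fun G => ?_]
  · refine Finset.sum_congr rfl fun t ht => ?_
    rw [Finset.mem_Icc] at ht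
    have : NeZero t := ⟨by omega⟩
    have : NeZero (n + 1 - t) := ⟨by omega⟩
    rw [← card_splitAt (show t + (n + 1 - t) = n + 1 by omega)]
    exact Nat.card_congr (Equiv.subtypeSubtypeEquivSubtypeInter IsNCTree (SplitAt · t))
  obtain ⟨t, ht, hGt⟩ := exists_splitAt G.2
  refine ⟨t, ⟨ht, hGt⟩, fun t' ⟨ht', hGt'⟩ => ?_⟩
  rw [Finset.mem_Icc] at ht ht'
  exact le_antisymm (hGt.le_of_splitAt G.2.1.connected ht.1 hGt')
    (hGt'.le_of_splitAt G.2.1.connected ht'.1 hGt)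

theorem A_recurrence :
    A 1 = 1 ∧
    ∀ n : ℕ, 2 ≤ n → A n = ∑ j ∈ Finset.Icc 2 n, A₁ (n + 2 - j) * A (j - 1) := by
  refine ⟨A_one, fun n hn => ?_⟩
  rw [A_eq_sum hn, show Finset.Icc 2 n = (Finset.Icc 1 (n - 1)).map (addRightEmbedding 1) by
    rw [Finset.map_add_right_Icc]; congr 1; omega, Finset.sum_map]
  refine Finset.sum_congr rfl fun t ht => ?_
  rw [Finset.mem_Icc] at ht
  simp only [addRightEmbedding_apply, Nat.add_sub_cancel]
  congr 2
  omega
end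

section
/- Let 𝓑 be a formal power series over ℚ satisfying X·𝓑(X)³ = 𝓑(X) − 1. Then for every n ≥ 0 the coefficient of X^n in 𝓑 equals (1/(2n+1))·binom(3n, n). -/
/-!
Applying the Euler operator `θ = X • d/dX` to `X 𝓑³ = 𝓑 - 1` gives `θ𝓑 · (1 - 3X𝓑²) = X𝓑³`, and
since `1 - 3X𝓑²` is a unit, eliminating `𝓑` yields the linear equation
`(4θ² + 2θ) 𝓑 = X (27θ² + 27θ + 6) 𝓑`. On coefficients this is the hypergeometric recurrence
`2(n+1)(2n+3) bₙ₊₁ = 3(3n+1)(3n+2) bₙ`, which `binom(3n, n)/(2n+1)` also satisfies; both start at `1`.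
-/

namespace Nat

theorem two_mul_add_one_mul_choose_three_mul_succ (n : ℕ) :
    (2 * n + 1) * (2 * n + 2) * (3 * (n + 1)).choose (n + 1) =
      3 * (3 * n + 1) * (3 * n + 2) * (3 * n).choose n := by
  have h1 := add_one_mul_choose_eq (3 * n) n
  have h2 := choose_mul_succ_eq (3 * n + 1) (n + 1)
  have h3 := choose_mul_succ_eq (3 * n + 2) (n + 1)
  rw [show 3 * n + 1 + 1 - (n + 1) = 2 * n + 1 by omega,
    show 3 * n + 1 + 1 = 3 * n + 2 by ring] at h2
  rw [show 3 * n + 2 + 1 - (n + 1) = 2 * n + 2 by omega,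
    show 3 * n + 2 + 1 = 3 * (n + 1) by ring] at h3
  apply Nat.eq_of_mul_eq_mul_right (Nat.succ_pos n)
  zify at h1 h2 h3 ⊢
  linear_combination (-(2 * n + 1) * (n + 1) : ℤ) * h3 - (3 * n + 3) * (n + 1) * h2
    - (3 * n + 2) * (3 * n + 3) * h1

end Nat

namespace PowerSeries

variable (R : Type*) [CommRing R]

noncomputable def eulerOp : Derivation R R⟦X⟧ R⟦X⟧ := (X : R⟦X⟧) • d⁄dX R

variable {R}

theorem eulerOp_apply (f : R⟦X⟧) : eulerOp R f = X * d⁄dX R f := rfl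

@[simp] theorem eulerOp_X : eulerOp R X = X := by simp [eulerOp_apply]

theorem coeff_eulerOp (n : ℕ) (f : R⟦X⟧) : coeff n (eulerOp R f) = n * coeff n f := by
  cases n with
  | zero => simp [eulerOp_apply]
  | succ n => simp [eulerOp_apply, coeff_succ_X_mul, coeff_derivative, mul_comm]

theorem coeff_ofNat_mul (a : ℕ) [a.AtLeastTwo] (n : ℕ) (f : R⟦X⟧) :
    coeff n ((ofNat(a) : R⟦X⟧) * f) = ofNat(a) * coeff n f := by
  rw [← map_ofNat C a, coeff_C_mul]

theorem coeff_succ_of_eulerOp_ode {f : R⟦X⟧}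
    (hf : 4 * eulerOp R (eulerOp R f) + 2 * eulerOp R f =
      X * (27 * eulerOp R (eulerOp R f) + 27 * eulerOp R f + 6 * f)) (n : ℕ) :
    2 * (n + 1) * (2 * n + 3) * coeff (n + 1) f = 3 * (3 * n + 1) * (3 * n + 2) * coeff n f := by
  have h := congrArg (coeff (n + 1)) hf
  simp only [map_add, coeff_succ_X_mul, coeff_ofNat_mul, coeff_eulerOp] at h
  push_cast at h
  linear_combination h

section FunctionalEquation

variable {B : R⟦X⟧}

theorem constantCoeff_of_X_mul_pow_three_eq_sub_one (h : X * B ^ 3 = B - 1) :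
    constantCoeff B = 1 := by
  have h0 := congrArg constantCoeff h
  simp only [map_mul, constantCoeff_X, zero_mul, map_sub, map_one] at h0
  linear_combination -h0

theorem eulerOp_mul_one_sub_of_X_mul_pow_three_eq_sub_one (h : X * B ^ 3 = B - 1) :
    eulerOp R B * (1 - 3 * X * B ^ 2) = X * B ^ 3 := by
  have h' := congrArg (eulerOp R) h
  simp only [Derivation.leibniz, Derivation.leibniz_pow, eulerOp_X, map_sub,
    Derivation.map_one_eq_zero, smul_eq_mul, nsmul_eq_mul] at h'
  push_cast at h'
  linear_combination -h'

theorem eulerOp_eulerOp_mul_one_sub_of_X_mul_pow_three_eq_sub_one (h : X * B ^ 3 = B - 1) :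
    eulerOp R (eulerOp R B) * (1 - 3 * X * B ^ 2) =
      X * B ^ 3 + 6 * X * B ^ 2 * eulerOp R B + 6 * X * B * eulerOp R B ^ 2 := by
  have h1 := eulerOp_mul_one_sub_of_X_mul_pow_three_eq_sub_one h
  have h' := congrArg (eulerOp R)
    (show eulerOp R B = X * B ^ 3 + 3 * X * B ^ 2 * eulerOp R B by linear_combination h1)
  have h3 : eulerOp R (3 : R⟦X⟧) = 0 := mod_cast (eulerOp R).map_natCast 3
  simp only [Derivation.leibniz, Derivation.leibniz_pow, eulerOp_X, h3, map_add,
    smul_eq_mul, nsmul_eq_mul] at h'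
  push_cast at h'
  linear_combination h'

theorem eulerOp_ode_of_X_mul_pow_three_eq_sub_one (h : X * B ^ 3 = B - 1) :
    4 * eulerOp R (eulerOp R B) + 2 * eulerOp R B =
      X * (27 * eulerOp R (eulerOp R B) + 27 * eulerOp R B + 6 * B) := by
  have hu : IsUnit (1 - 3 * X * B ^ 2) := by simp [isUnit_iff_constantCoeff]
  apply (hu.pow 3).mul_left_cancel
  set u := 1 - 3 * X * B ^ 2
  have h1 := eulerOp_mul_one_sub_of_X_mul_pow_three_eq_sub_one h
  have h2 := eulerOp_eulerOp_mul_one_sub_of_X_mul_pow_three_eq_sub_one h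
  -- After substituting `θ𝓑 · u` and `θ²𝓑 · u`, the remainder is `6X𝓑 ((𝓑(1 - X𝓑²))² - 1)`,
  -- and `𝓑(1 - X𝓑²) = 1` is the functional equation.
  linear_combination (4 - 27 * X) * u ^ 2 * h2
    + ((2 - 27 * X) * u ^ 2 + 6 * (4 - 27 * X) * X * B ^ 2 * u
      + 6 * (4 - 27 * X) * X * B * (eulerOp R B * u + X * B ^ 3)) * h1
    - 6 * X * B * (B - X * B ^ 3 + 1) * h

end FunctionalEquation

end PowerSeries

theorem coeff_of_ternary_functional_equation (𝓑 : PowerSeries ℚ)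
    (h : PowerSeries.X * 𝓑 ^ 3 = 𝓑 - 1) :
    ∀ n : ℕ, PowerSeries.coeff n 𝓑 = (Nat.choose (3 * n) n : ℚ) / (2 * n + 1) := by
  have hrec := PowerSeries.coeff_succ_of_eulerOp_ode
    (PowerSeries.eulerOp_ode_of_X_mul_pow_three_eq_sub_one h)
  intro n
  induction n with
  | zero => simpa using PowerSeries.constantCoeff_of_X_mul_pow_three_eq_sub_one h
  | succ n ih =>
    have hchoose : ((2 * n + 1) * (2 * n + 2) * (3 * (n + 1)).choose (n + 1) : ℚ) =
        3 * (3 * n + 1) * (3 * n + 2) * (3 * n).choose n :=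
      mod_cast Nat.two_mul_add_one_mul_choose_three_mul_succ n
    apply mul_left_cancel₀ (by positivity : 2 * ((n : ℚ) + 1) * (2 * n + 3) ≠ 0)
    rw [hrec n, ih]
    push_cast
    field_simp
    linear_combination -(2 * n + 3 : ℚ) * hchoose
end

section
/- Let G be an n-noncrossing tree and suppose the rotation ρ^j (sending each vertex v to v+j mod n), for some 0 < j < n, maps the edge set of G to itself. Then n is even and j = n/2; moreover G contains exactly one edge whose endpoints are antipodal, i.e., exactly one edge of the form {a, a + n/2 (mod n)}, and this edge is fixed by the rotation. -/
/-- Rotation by `j`: the image of a graph on `ZMod n` under the vertex map `v ↦ v + j`. -/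
def rotate {n : ℕ} (j : ZMod n) (G : SimpleGraph (ZMod n)) : SimpleGraph (ZMod n) :=
  G.map (Equiv.addRight j).toEmbedding

/-!
A nonzero rotation fixes an edge only by swapping its endpoints, hence only if it is the half-turn
and the edge is a diameter; and a noncrossing graph has at most one diameter edge, since two
distinct diameters cross. If rotation by `j` preserves the tree, some multiple of it has prime
order `p`. Then `p ∣ n`, so `p` does not divide the number `n - 1` of edges, and a rotation of
order `p` permuting the edges must fix one; that edge is therefore a diameter. Rotation by `j`
maps this unique diameter edge to a diameter edge, so it fixes it, and `j` is the half-turn.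
-/

open SimpleGraph

namespace Equiv.Perm

variable {α : Type*}

def sym2Hom : Perm α →* Perm (Sym2 α) where
  toFun σ :=
    { toFun := Sym2.map σ
      invFun := Sym2.map σ.symm
      left_inv e := by simp [Sym2.map_map]
      right_inv e := by simp [Sym2.map_map] }
  map_one' := Equiv.ext fun e => by simp
  map_mul' σ τ := Equiv.ext fun e => by simp [Sym2.map_map]

theorem exists_mem_fixed_of_prime {p : ℕ} [Fact p.Prime] {τ : Perm α} (hτ : τ ^ p = 1)
    {s : Set α} [Finite s] (hs : ∀ x, τ x ∈ s ↔ x ∈ s) (hp : ¬ p ∣ Nat.card s) :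
    ∃ x ∈ s, τ x = x := by
  classical
  have := Fintype.ofFinite s
  obtain ⟨⟨x, hx⟩, hfix⟩ := exists_fixed_point_of_prime (n := 1) (σ := τ.subtypePerm hs)
    (by rwa [← Nat.card_eq_fintype_card])
    (by ext; simp [hτ])
  exact ⟨x, hx, congrArg Subtype.val hfix⟩

end Equiv.Perm

theorem Sym2.map_add_right_eq_self_iff {α : Type*} [AddGroup α] {k : α} (hk : k ≠ 0)
    (e : Sym2 α) : Sym2.map (· + k) e = e ↔ k + k = 0 ∧ ∃ a, e = s(a, a + k) := by
  induction e using Sym2.ind with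
  | _ a b =>
    rw [Sym2.map_mk, Sym2.eq_iff]
    constructor
    · rintro (⟨h, -⟩ | ⟨rfl, h⟩)
      · exact absurd (add_eq_left.mp h) hk
      · exact ⟨add_eq_left.mp (by rwa [← add_assoc]), a, rfl⟩
    · rintro ⟨hkk, c, hc⟩
      rcases Sym2.eq_iff.mp hc with ⟨rfl, rfl⟩ | ⟨rfl, rfl⟩
      · exact Or.inr ⟨rfl, by rw [add_assoc, hkk, add_zero]⟩
      · exact Or.inr ⟨by rw [add_assoc, hkk, add_zero], rfl⟩

namespace ZMod

variable {n : ℕ}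

theorem val_add_val_of_add_self_eq_zero [NeZero n] {k : ZMod n} (hk : k ≠ 0) (h : k + k = 0) :
    k.val + k.val = n := by
  have hdvd : n ∣ k.val + k.val := by
    rw [← ZMod.natCast_eq_zero_iff, Nat.cast_add, natCast_val, cast_id', id, h]
  exact Nat.eq_of_dvd_of_lt_two_mul (by simpa [val_eq_zero] using hk) hdvd
    (by have := val_lt k; omega)

theorem natCast_half_add_self (hn : Even n) :
    ((n / 2 : ℕ) : ZMod n) + ((n / 2 : ℕ) : ZMod n) = 0 := by
  rw [← Nat.cast_add, ← two_mul, Nat.two_mul_div_two_of_even hn, natCast_self]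

theorem val_natCast_half [NeZero n] : ((n / 2 : ℕ) : ZMod n).val = n / 2 :=
  val_natCast_of_lt (Nat.div_lt_self (Nat.pos_of_neZero n) one_lt_two)

theorem val_add_natCast_half [NeZero n] (hn : Even n) {a : ZMod n} (ha : a.val < n / 2) :
    (a + ((n / 2 : ℕ) : ZMod n)).val = a.val + n / 2 := by
  rw [val_add, val_natCast_half]
  exact Nat.mod_eq_of_lt (by obtain ⟨c, rfl⟩ := hn; omega)

end ZMod

def IsDiameter {n : ℕ} (e : Sym2 (ZMod n)) : Prop :=
  ∃ a : ZMod n, e = s(a, a + ((n / 2 : ℕ) : ZMod n))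

namespace IsDiameter

variable {n : ℕ} {e : Sym2 (ZMod n)}

theorem map_add_right (he : IsDiameter e) (k : ZMod n) : IsDiameter (Sym2.map (· + k) e) := by
  obtain ⟨a, rfl⟩ := he
  exact ⟨a + k, by rw [Sym2.map_mk, add_right_comm]⟩

theorem exists_val_lt_half [NeZero n] (hn : Even n) (he : IsDiameter e) :
    ∃ a : ZMod n, a.val < n / 2 ∧ e = s(a, a + ((n / 2 : ℕ) : ZMod n)) := by
  obtain ⟨a, rfl⟩ := he
  by_cases ha : a.val < n / 2
  · exact ⟨a, ha, rfl⟩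
  refine ⟨a + ((n / 2 : ℕ) : ZMod n), ?_, ?_⟩
  · have := a.val_lt
    have ⟨c, hc⟩ := hn
    rw [ZMod.val_add, ZMod.val_natCast_half, Nat.mod_eq_sub_mod (by omega),
      Nat.mod_eq_of_lt (by omega)]
    omega
  · rw [add_assoc, ZMod.natCast_half_add_self hn, add_zero, Sym2.eq_swap]

end IsDiameter

theorem isDiameter_of_map_add_right_eq_self {n : ℕ} [NeZero n] {k : ZMod n} (hk : k ≠ 0)
    {e : Sym2 (ZMod n)} (he : Sym2.map (· + k) e = e) : Even n ∧ IsDiameter e := by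
  obtain ⟨hkk, a, rfl⟩ := (Sym2.map_add_right_eq_self_iff hk e).mp he
  have hval := ZMod.val_add_val_of_add_self_eq_zero hk hkk
  refine ⟨⟨k.val, hval.symm⟩, a, ?_⟩
  rw [show n / 2 = k.val by omega, ZMod.natCast_zmod_val]

theorem Noncrossing.eq_of_isDiameter {n : ℕ} [NeZero n] (hn : Even n)
    {G : SimpleGraph (ZMod n)} (hG : Noncrossing G) {e₁ e₂ : Sym2 (ZMod n)}
    (h₁ : e₁ ∈ G.edgeSet) (h₂ : e₂ ∈ G.edgeSet) (hd₁ : IsDiameter e₁) (hd₂ : IsDiameter e₂) :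
    e₁ = e₂ := by
  obtain ⟨a, ha, rfl⟩ := hd₁.exists_val_lt_half hn
  obtain ⟨c, hc, rfl⟩ := hd₂.exists_val_lt_half hn
  have not_lt : ∀ a c : ZMod n, G.Adj a (a + ((n / 2 : ℕ) : ZMod n)) →
      G.Adj c (c + ((n / 2 : ℕ) : ZMod n)) → a.val < n / 2 → c.val < n / 2 → ¬ a.val < c.val :=
    fun a c hac hcc ha hc hlt => hG a _ c _ hac hcc ⟨hlt,
      by rw [ZMod.val_add_natCast_half hn ha]; omega,
      by rw [ZMod.val_add_natCast_half hn ha, ZMod.val_add_natCast_half hn hc]; omega⟩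
  have := not_lt a c h₁ h₂ ha hc
  have := not_lt c a h₂ h₁ hc ha
  rw [ZMod.val_injective n (by omega : a.val = c.val)]

section Rotate

variable {n : ℕ}

theorem rotate_zero (G : SimpleGraph (ZMod n)) : rotate 0 G = G := by
  ext; simp [rotate]

theorem rotate_add (k l : ZMod n) (G : SimpleGraph (ZMod n)) :
    rotate (k + l) G = rotate l (rotate k G) := by
  simp only [rotate, map_map]
  congr 1
  ext
  simp [add_assoc]

theorem rotate_nsmul_eq_self {k : ZMod n} {G : SimpleGraph (ZMod n)} (h : rotate k G = G)
    (t : ℕ) : rotate (t • k) G = G := by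
  induction t with
  | zero => rw [zero_nsmul, rotate_zero]
  | succ t ih => rw [succ_nsmul, rotate_add, ih, h]

theorem map_add_right_mem_edgeSet_rotate {k : ZMod n} {G : SimpleGraph (ZMod n)}
    {e : Sym2 (ZMod n)} : Sym2.map (· + k) e ∈ (rotate k G).edgeSet ↔ e ∈ G.edgeSet := by
  rw [rotate, edgeSet_map]
  exact (Function.Embedding.sym2Map _).injective.mem_set_image

end Rotate

theorem SimpleGraph.IsTree.exists_map_add_right_eq_self_of_rotate_eq {n : ℕ} [NeZero n]
    {G : SimpleGraph (ZMod n)} (hG : G.IsTree) {k : ZMod n} (hk : k ≠ 0)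
    (hrot : rotate k G = G) : ∃ l : ZMod n, l ≠ 0 ∧ ∃ e ∈ G.edgeSet, Sym2.map (· + l) e = e := by
  set m := addOrderOf k
  have hm : m ≠ 1 := by simpa [m] using hk
  set p := m.minFac
  have hp : p.Prime := Nat.minFac_prime hm
  have : Fact p.Prime := ⟨hp⟩
  set l := (m / p) • k
  have hl : addOrderOf l = p :=
    addOrderOf_nsmul_addOrderOf_sub (addOrderOf_pos k).ne' (Nat.minFac_dvd m)
  have hpn : p ∣ n := (Nat.minFac_dvd m).trans (by simpa using addOrderOf_dvd_natCard k)
  have hcard : Nat.card G.edgeSet + 1 = n := by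
    simpa using (isTree_iff_connected_and_card.mp hG).2
  refine ⟨l, fun h => hp.one_lt.ne' (by simpa [h] using hl.symm), ?_⟩
  refine Equiv.Perm.exists_mem_fixed_of_prime (p := p)
    (τ := Equiv.Perm.sym2Hom (Equiv.addRight l)) ?_ (fun e => ?_) (fun hdvd => hp.not_dvd_one ?_)
  · rw [← map_pow, Equiv.nsmul_addRight, ← hl, addOrderOf_nsmul_eq_zero, Equiv.addRight_zero,
      map_one]
  · conv_lhs => rw [← rotate_nsmul_eq_self hrot (m / p)]
    exact map_add_right_mem_edgeSet_rotate
  · rwa [← Nat.dvd_add_right hdvd, hcard]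

theorem rotation_symmetry_of_ncTree_general {n : ℕ}
    (G : SimpleGraph (ZMod n)) (hG : IsNCTree G)
    (j : ℕ) (hj0 : 0 < j) (hjn : j < n)
    (hinv : rotate (j : ZMod n) G = G) :
    Even n ∧ j = n / 2 ∧
      (∃! e : Sym2 (ZMod n), e ∈ G.edgeSet ∧
          ∃ a : ZMod n, e = s(a, a + ((n / 2 : ℕ) : ZMod n))) ∧
      (∀ e ∈ G.edgeSet, (∃ a : ZMod n, e = s(a, a + ((n / 2 : ℕ) : ZMod n))) →
        Sym2.map (· + (j : ZMod n)) e = e) := by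
  have : NeZero n := ⟨by omega⟩
  have hJval : (j : ZMod n).val = j := ZMod.val_natCast_of_lt hjn
  have hJ : (j : ZMod n) ≠ 0 := fun h => by simp [h] at hJval; omega
  obtain ⟨l, hl, e, he, hle⟩ := hG.1.exists_map_add_right_eq_self_of_rotate_eq hJ hinv
  obtain ⟨heven, hdiam⟩ := isDiameter_of_map_add_right_eq_self hl hle
  have huniq : ∀ e' ∈ G.edgeSet, IsDiameter e' → e' = e :=
    fun e' he' hd' => hG.2.eq_of_isDiameter heven he' he hd' hdiam
  have hJe : Sym2.map (· + (j : ZMod n)) e = e :=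
    huniq _ (hinv ▸ map_add_right_mem_edgeSet_rotate.mpr he) (hdiam.map_add_right _)
  have hJJ := ((Sym2.map_add_right_eq_self_iff hJ e).mp hJe).1
  have hj := ZMod.val_add_val_of_add_self_eq_zero hJ hJJ
  refine ⟨heven, by omega, ⟨e, ⟨he, hdiam⟩, fun e' he' => huniq e' he'.1 he'.2⟩, ?_⟩
  intro e' he' hd'
  rw [huniq e' he' hd', hJe]

theorem rotation_symmetry_of_ncTree {n : ℕ} (hn : 1 ≤ n)
    (G : SimpleGraph (ZMod n)) (hG : IsNCTree G)
    (j : ℕ) (hj0 : 0 < j) (hjn : j < n)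
    (hinv : rotate (j : ZMod n) G = G) :
    Even n ∧ j = n / 2 ∧
      (∃! e : Sym2 (ZMod n), e ∈ G.edgeSet ∧
          ∃ a : ZMod n, e = s(a, a + ((n / 2 : ℕ) : ZMod n))) ∧
      (∀ e ∈ G.edgeSet, (∃ a : ZMod n, e = s(a, a + ((n / 2 : ℕ) : ZMod n))) →
        Sym2.map (· + (j : ZMod n)) e = e) :=
  rotation_symmetry_of_ncTree_general G hG j hj0 hjn hinv
end

section
/- For every integer n ≥ 2, the number of n-noncrossing trees containing the edge {1, n} (an edge between the two cyclically adjacent vertices 1 and n) equals A_1(n), the number of n-noncrossing trees in which vertex 1 has degree 1. -/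
open SimpleGraph

namespace SimpleGraph

variable {V W : Type*} {G H : SimpleGraph V}

lemma Reachable.mem_of_adj_closed {S : Set V} (hS : ∀ x ∈ S, ∀ y, G.Adj x y → y ∈ S)
    {u v : V} (huv : G.Reachable u v) (hu : u ∈ S) : v ∈ S :=
  huv.mem_subgraphVerts (H := (⊤ : G.Subgraph).induce S)
    (fun x hx y hxy => ⟨hx, hS x hx y hxy, hxy⟩) hu

lemma Reachable.map_of_adj_until {H : SimpleGraph W} (f : V → W) {S : Set V} {u t : V}
    (hS : ∀ x ∈ S, x ≠ t → ∀ y, G.Adj x y → y ∈ S ∧ H.Adj (f x) (f y))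
    (hut : G.Reachable u t) (hu : u ∈ S) : H.Reachable (f u) (f t) := by
  obtain ⟨p⟩ := hut
  induction p with
  | nil => rfl
  | @cons x y t hxy p ih =>
    by_cases hx : x = t
    · subst hx; rfl
    · obtain ⟨hy, hf⟩ := hS x hu hx y hxy
      exact hf.reachable.trans (ih hS hy)

lemma Reachable.reachable_deleteEdges_or {u v w : V} (huw : G.Reachable u w) :
    (G.deleteEdges {s(u, v)}).Reachable w u ∨ (G.deleteEdges {s(u, v)}).Reachable w v := by
  refine huw.mem_of_adj_closed
    (S := {w | (G.deleteEdges {s(u, v)}).Reachable w u ∨ (G.deleteEdges {s(u, v)}).Reachable w v})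
    ?_ (Or.inl .rfl)
  intro x hx y hxy
  by_cases he : s(x, y) = s(u, v)
  · rcases Sym2.eq_iff.1 he with ⟨-, rfl⟩ | ⟨-, rfl⟩
    exacts [Or.inr .rfl, Or.inl .rfl]
  · have hyx : (G.deleteEdges {s(u, v)}).Adj y x :=
      (deleteEdges_adj ..).2 ⟨hxy.symm, by rwa [Set.mem_singleton_iff, Sym2.eq_swap]⟩
    exact hx.imp hyx.reachable.trans hyx.reachable.trans

lemma edgeSet_fromEdgeSet_of_forall_not_isDiag {s : Set (Sym2 V)} (hs : ∀ e ∈ s, ¬ e.IsDiag) :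
    (fromEdgeSet s).edgeSet = s := by
  rw [edgeSet_fromEdgeSet, sdiff_eq_left, Set.disjoint_left]
  exact hs

lemma IsTree.of_connected_of_edgeSet_eq_image [Finite V] (hG : G.IsTree) (hH : H.Connected)
    {f : Sym2 V → Sym2 V} (hf : Set.InjOn f G.edgeSet) (hE : H.edgeSet = f '' G.edgeSet) :
    H.IsTree := by
  rw [isTree_iff_connected_and_card] at hG ⊢
  rw [hE, Nat.card_image_of_injOn hf]
  exact ⟨hH, hG.2⟩

end SimpleGraph

namespace ZMod

variable {n : ℕ} [Fact (1 < n)]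

lemma val_add_one_of_lt {a : ZMod n} (h : a.val + 1 < n) : (a + 1).val = a.val + 1 := by
  rw [val_add_of_lt (by rwa [val_one]), val_one]

lemma val_sub_one_of_pos {a : ZMod n} (h : 0 < a.val) : (a - 1).val = a.val - 1 := by
  rw [val_sub (by rw [val_one]; omega), val_one]

lemma natCast_sub_one_eq_neg_one : ((n - 1 : ℕ) : ZMod n) = -1 := by
  rw [Nat.cast_sub (by have := Fact.out (p := 1 < n); omega), natCast_self, Nat.cast_one, zero_sub]

lemma val_neg_one_of_one_lt : (-1 : ZMod n).val = n - 1 := by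
  rw [val_neg_of_ne_zero, val_one]

end ZMod

namespace Noncrossing

variable {n : ℕ} {G : SimpleGraph (ZMod n)}

lemma mono {H : SimpleGraph (ZMod n)} (hG : Noncrossing G) (hHG : H ≤ G) :
    Noncrossing H :=
  fun a b c d hab hcd => hG a b c d (hHG hab) (hHG hcd)

section Walks

variable [NeZero n]

lemma walk_stays_between (hG : Noncrossing G) {a b : ZMod n} (hab : G.Adj a b)
    {u v : ZMod n} (p : G.Walk u v) (hp : ∀ w ∈ p.support, w ≠ a ∧ w ≠ b)
    (hu : a.val < u.val ∧ u.val < b.val) : a.val < v.val ∧ v.val < b.val := by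
  induction p with
  | nil => exact hu
  | @cons x y z hxy p ih =>
    have hya : y.val ≠ a.val := (ZMod.val_injective n).ne (hp y (by simp)).1
    have hyb : y.val ≠ b.val := (ZMod.val_injective n).ne (hp y (by simp)).2
    have h₁ := hG a b x y hab hxy
    have h₂ := hG y x a b hxy.symm hab
    exact ih (fun w hw => hp w (by simp [hw])) (by omega)

/-- Each edge of `q` either keeps `q` in the arc between `v` and `u` or encloses `u` or `v`,
and in the latter case `walk_stays_between` traps `p` between the ends of that edge. -/
lemma walks_not_interleaved (hG : Noncrossing G) {u v x y : ZMod n}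
    (p : G.Walk u v) (q : G.Walk x y) (hpq : ∀ w ∈ p.support, w ∉ q.support) :
    ¬ (v.val < x.val ∧ x.val < u.val ∧ u.val < y.val) := by
  induction q with
  | nil => omega
  | @cons x x' y hxx' q ih =>
    rintro ⟨hvx, hxu, huy⟩
    have hx : ∀ w ∈ p.support, w ≠ x := fun w hw h => hpq w hw (by simp [h])
    have hx' : ∀ w ∈ p.support, w ≠ x' := fun w hw h => hpq w hw (by simp [h])
    have hux' : u.val ≠ x'.val := (ZMod.val_injective n).ne (hx' u p.start_mem_support)
    have hvx' : v.val ≠ x'.val := (ZMod.val_injective n).ne (hx' v p.end_mem_support)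
    have hxx'val : x.val ≠ x'.val := (ZMod.val_injective n).ne hxx'.ne
    have ih' := ih (fun w hw hq => hpq w hw (by simp [hq]))
    rcases lt_or_gt_of_ne hxx'val with hlt | hgt
    · by_cases hu' : u.val < x'.val
      · have := hG.walk_stays_between hxx' p (fun w hw => ⟨hx w hw, hx' w hw⟩) ⟨hxu, hu'⟩
        omega
      · exact ih' (by omega)
    · by_cases hv' : x'.val < v.val
      · have := hG.walk_stays_between hxx'.symm p.reverse
          (fun w hw => ⟨hx' w (by simpa using hw), hx w (by simpa using hw)⟩) ⟨hv', hvx⟩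
        omega
      · exact ih' (by omega)

end Walks

end Noncrossing

namespace NCTree

variable {n : ℕ} {G : SimpleGraph (ZMod n)} {k : ℕ}

structure IsSplitAt (G : SimpleGraph (ZMod n)) (k : ℕ) : Prop where
  pos : 0 < k
  lt : k < n
  val_lt_iff : ∀ a b, G.Adj a b → s(a, b) ≠ s(0, -1) → (a.val < k ↔ b.val < k)

noncomputable def splitPoint (G : SimpleGraph (ZMod n)) : ℕ := sInf {k | IsSplitAt G k}

lemma IsSplitAt.adj_cases (h : IsSplitAt G k) {a b : ZMod n} (hab : G.Adj a b) :
    s(a, b) = s(0, -1) ∨ (a.val < k ∧ b.val < k) ∨ (k ≤ a.val ∧ k ≤ b.val) := by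
  by_cases he : s(a, b) = s(0, -1)
  · exact Or.inl he
  · have hab' := h.val_lt_iff a b hab he
    by_cases ha : a.val < k
    · exact Or.inr (Or.inl ⟨ha, hab'.1 ha⟩)
    · exact Or.inr (Or.inr ⟨not_lt.1 ha, not_lt.1 (mt hab'.2 ha)⟩)

lemma IsSplitAt.val_natCast (h : IsSplitAt G k) : ((k : ℕ) : ZMod n).val = k :=
  ZMod.val_cast_of_lt h.lt

lemma IsSplitAt.natCast_ne_zero (h : IsSplitAt G k) : ((k : ℕ) : ZMod n) ≠ 0 := fun h0 =>
  h.pos.ne' (by rw [← h.val_natCast, h0, ZMod.val_zero])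

section Split

variable [Fact (1 < n)]

lemma IsSplitAt.le_of_isSplitAt {k' : ℕ} (hc : G.Connected) (h : IsSplitAt G k)
    (h' : IsSplitAt G k') : k ≤ k' := by
  by_contra! hk'k
  have hk'0 := h'.pos
  have hkn := h.lt
  have hval := ZMod.val_neg_one_of_one_lt (n := n)
  have hzero : (0 : ZMod n).val = 0 := ZMod.val_zero
  have hS : ∀ x ∈ {v : ZMod n | k' ≤ v.val ∧ v.val < k}, ∀ y, G.Adj x y →
      y ∈ {v : ZMod n | k' ≤ v.val ∧ v.val < k} := by
    rintro x ⟨hkx, hxk⟩ y hxy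
    have hne : s(x, y) ≠ s(0, -1) := by
      rw [Ne, Sym2.eq_iff]
      rintro (⟨rfl, -⟩ | ⟨rfl, -⟩) <;> omega
    exact ⟨not_lt.1 fun hy => (not_lt.2 hkx) ((h'.val_lt_iff x y hxy hne).2 hy),
      (h.val_lt_iff x y hxy hne).1 hxk⟩
  have h0 := (hc.preconnected (k' : ZMod n) 0).mem_of_adj_closed hS
    (show k' ≤ _ ∧ _ by rw [h'.val_natCast]; exact ⟨le_rfl, hk'k⟩)
  exact absurd h0.1 (by omega)

lemma IsSplitAt.unique {k' : ℕ} (hc : G.Connected) (h : IsSplitAt G k) (h' : IsSplitAt G k') :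
    k = k' :=
  le_antisymm (h.le_of_isSplitAt hc h') (h'.le_of_isSplitAt hc h)

lemma splitPoint_eq (hc : G.Connected) (h : IsSplitAt G k) : splitPoint G = k :=
  IsSplitAt.unique hc (Nat.sInf_mem (s := {k | IsSplitAt G k}) ⟨k, h⟩) h

lemma val_lt_val_of_reachable_deleteEdges (hT : G.IsTree) (hnc : Noncrossing G)
    (hadj : G.Adj 0 (-1)) {u x : ZMod n}
    (hu : (G.deleteEdges {s(0, -1)}).Reachable u 0)
    (hx : (G.deleteEdges {s(0, -1)}).Reachable x (-1)) : u.val < x.val := by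
  set D := G.deleteEdges {s(0, -1)}
  have hsep : ∀ w, D.Reachable w 0 → ¬ D.Reachable w (-1) := fun w h₀ h₁ =>
    isBridge_iff.1 (isAcyclic_iff_forall_adj_isBridge.1 hT.isAcyclic hadj) (h₀.symm.trans h₁)
  have hx0 : x ≠ 0 := by rintro rfl; exact hsep 0 .rfl hx
  have hu1 : u ≠ -1 := by rintro rfl; exact hsep _ hu .rfl
  have hxu : x ≠ u := by rintro rfl; exact hsep x hu hx
  have hval := ZMod.val_neg_one_of_one_lt (n := n)
  have hu1' : u.val ≠ (-1 : ZMod n).val := (ZMod.val_injective n).ne hu1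
  have hxu' : x.val ≠ u.val := (ZMod.val_injective n).ne hxu
  have hu_lt := ZMod.val_lt u
  obtain ⟨p⟩ := hu
  obtain ⟨q⟩ := hx
  by_contra hle
  refine (hnc.mono (deleteEdges_le _)).walks_not_interleaved p q
    (fun w hwp hwq => hsep w ⟨p.dropUntil w hwp⟩ ⟨q.dropUntil w hwq⟩)
    ⟨by simpa using ZMod.val_pos.2 hx0, by omega, by omega⟩

lemma exists_isSplitAt (hT : G.IsTree) (hnc : Noncrossing G) (hadj : G.Adj 0 (-1)) :
    ∃ k, IsSplitAt G k := by
  set D := G.deleteEdges {s(0, -1)}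
  set k := sInf {i : ℕ | D.Reachable (i : ZMod n) (-1)}
  have hmem : n - 1 ∈ {i : ℕ | D.Reachable (i : ZMod n) (-1)} := by
    simp only [Set.mem_ofPred_eq, ZMod.natCast_sub_one_eq_neg_one]; rfl
  have hkn : k < n := by
    have := Nat.sInf_le hmem
    have := Fact.out (p := 1 < n)
    omega
  have hk : D.Reachable (k : ZMod n) (-1) := Nat.sInf_mem ⟨_, hmem⟩
  have hlt : ∀ v : ZMod n, v.val < k ↔ D.Reachable v 0 := by
    intro v
    constructor
    · intro hv
      refine ((hT.connected.preconnected 0 v).reachable_deleteEdges_or).resolve_right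
        fun h => ?_
      have := Nat.sInf_le (show v.val ∈ {i : ℕ | D.Reachable (i : ZMod n) (-1)} by
        simpa only [Set.mem_ofPred_eq, ZMod.natCast_zmod_val] using h)
      omega
    · intro hv
      simpa only [ZMod.val_cast_of_lt hkn] using
        val_lt_val_of_reachable_deleteEdges hT hnc hadj hv hk
  refine ⟨k, by simpa using (hlt 0).2 .rfl, hkn, fun a b hab he => ?_⟩
  have hD : D.Adj a b := (deleteEdges_adj ..).2 ⟨hab, he⟩
  rw [hlt, hlt]
  exact ⟨hD.symm.reachable.trans, hD.reachable.trans⟩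

lemma isSplitAt_splitPoint (hT : G.IsTree) (hnc : Noncrossing G) (hadj : G.Adj 0 (-1)) :
    IsSplitAt G (splitPoint G) :=
  Nat.sInf_mem (exists_isSplitAt hT hnc hadj)

end Split

open Classical in
noncomputable def raiseEdge (k : ℕ) (e : Sym2 (ZMod n)) : Sym2 (ZMod n) :=
  if e = s(0, -1) then s(0, (k : ZMod n)) else if ∀ v ∈ e, v.val < k then e.map (· + 1) else e

open Classical in
noncomputable def lowerEdge (k : ℕ) (e : Sym2 (ZMod n)) : Sym2 (ZMod n) :=
  if (0 : ZMod n) ∈ e then s(0, -1) else if ∀ v ∈ e, v.val ≤ k then e.map (· - 1) else e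

noncomputable def raise (k : ℕ) (G : SimpleGraph (ZMod n)) : SimpleGraph (ZMod n) :=
  fromEdgeSet (raiseEdge k '' G.edgeSet)

noncomputable def lower (k : ℕ) (G : SimpleGraph (ZMod n)) : SimpleGraph (ZMod n) :=
  fromEdgeSet (lowerEdge k '' G.edgeSet)

lemma raiseEdge_zero_neg_one : raiseEdge k s((0 : ZMod n), -1) = s(0, (k : ZMod n)) :=
  if_pos rfl

lemma lowerEdge_zero_left {b : ZMod n} : lowerEdge k s(0, b) = s(0, -1) :=
  if_pos (Sym2.mem_mk_left _ _)

section EdgeMaps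

variable {a b : ZMod n}

lemma raiseEdge_of_le (hk : 0 < k) (ha : k ≤ a.val) (hb : k ≤ b.val) :
    raiseEdge k s(a, b) = s(a, b) := by
  have hzero : (0 : ZMod n).val = 0 := ZMod.val_zero
  have hne : s(a, b) ≠ s(0, -1) := by
    rw [Ne, Sym2.eq_iff]
    rintro (⟨rfl, -⟩ | ⟨-, rfl⟩) <;> omega
  simp [raiseEdge, hne, not_lt.2 ha]

lemma lowerEdge_of_le (ha : 0 < a.val) (ha' : a.val ≤ k) (hb : 0 < b.val) (hb' : b.val ≤ k) :
    lowerEdge k s(a, b) = s(a - 1, b - 1) := by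
  simp [lowerEdge, Ne.symm (ZMod.val_pos.1 ha), Ne.symm (ZMod.val_pos.1 hb), ha', hb']

variable [Fact (1 < n)]

lemma raiseEdge_of_lt (hk : k < n) (ha : a.val < k) (hb : b.val < k) :
    raiseEdge k s(a, b) = s(a + 1, b + 1) := by
  have hval := ZMod.val_neg_one_of_one_lt (n := n)
  have hne : s(a, b) ≠ s(0, -1) := by
    rw [Ne, Sym2.eq_iff]
    rintro (⟨-, rfl⟩ | ⟨rfl, -⟩) <;> omega
  simp [raiseEdge, hne, ha, hb]

lemma lowerEdge_of_ge (hk : 0 < k) (ha : k ≤ a.val) (hb : k ≤ b.val) (hab : a ≠ b) :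
    lowerEdge k s(a, b) = s(a, b) := by
  have hab' : a.val ≠ b.val := (ZMod.val_injective n).ne hab
  have ha0 : (0 : ZMod n) ≠ a := Ne.symm (ZMod.val_pos.1 (by omega))
  have hb0 : (0 : ZMod n) ≠ b := Ne.symm (ZMod.val_pos.1 (by omega))
  have hnot : ¬ (a.val ≤ k ∧ b.val ≤ k) := by omega
  simp only [lowerEdge, Sym2.mem_iff, ha0, hb0, or_self, if_false]
  rw [if_neg (by simpa using hnot)]

end EdgeMaps

lemma IsSplitAt.raise_adj_zero (h : IsSplitAt G k) (hadj : G.Adj 0 (-1)) :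
    (raise k G).Adj 0 k :=
  (fromEdgeSet_adj _).2 ⟨⟨_, hadj, raiseEdge_zero_neg_one⟩, h.natCast_ne_zero.symm⟩

lemma IsSplitAt.raise_reachable_neg_one (h : IsSplitAt G k) (hc : G.Connected) {v : ZMod n}
    (hv : k ≤ v.val) : (raise k G).Reachable v (-1) := by
  have hk0 := h.pos
  have hzero : (0 : ZMod n).val = 0 := ZMod.val_zero
  have hS : ∀ x ∈ {v : ZMod n | k ≤ v.val}, x ≠ -1 → ∀ y, G.Adj x y →
      y ∈ {v : ZMod n | k ≤ v.val} ∧ (raise k G).Adj (id x) (id y) := by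
    intro x hx hx1 y hxy
    rcases h.adj_cases hxy with hs | ⟨hx', -⟩ | ⟨-, hy⟩
    · rcases Sym2.eq_iff.1 hs with ⟨rfl, -⟩ | ⟨rfl, -⟩
      · exact absurd hx (by simp only [Set.mem_ofPred_eq]; omega)
      · exact absurd rfl hx1
    · exact absurd hx (by simp only [Set.mem_ofPred_eq]; omega)
    · exact ⟨hy, (fromEdgeSet_adj _).2 ⟨⟨_, hxy, raiseEdge_of_le hk0 hx hy⟩, G.ne_of_adj hxy⟩⟩
  exact (hc.preconnected v (-1)).map_of_adj_until id hS hv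

section Raise

variable [Fact (1 < n)]

lemma IsSplitAt.leftInvOn (h : IsSplitAt G k) :
    Set.LeftInvOn (lowerEdge k) (raiseEdge k) G.edgeSet := by
  intro e he
  induction e using Sym2.ind with | _ a b => ?_
  have hab : G.Adj a b := he
  have hk := h.lt
  rcases h.adj_cases hab with hs | ⟨ha, hb⟩ | ⟨ha, hb⟩
  · rw [hs, raiseEdge_zero_neg_one, lowerEdge_zero_left]
  · have hva := ZMod.val_add_one_of_lt (a := a) (by omega)
    have hvb := ZMod.val_add_one_of_lt (a := b) (by omega)
    rw [raiseEdge_of_lt hk ha hb, lowerEdge_of_le (by omega) (by omega) (by omega) (by omega),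
      add_sub_cancel_right, add_sub_cancel_right]
  · rw [raiseEdge_of_le h.pos ha hb, lowerEdge_of_ge h.pos ha hb (G.ne_of_adj he)]

lemma IsSplitAt.edgeSet_raise (h : IsSplitAt G k) :
    (raise k G).edgeSet = raiseEdge k '' G.edgeSet := by
  refine edgeSet_fromEdgeSet_of_forall_not_isDiag ?_
  rintro _ ⟨e, he, rfl⟩
  induction e using Sym2.ind with | _ a b => ?_
  have hab : G.Adj a b := he
  rcases h.adj_cases hab with hs | ⟨ha, hb⟩ | ⟨ha, hb⟩
  · rw [hs, raiseEdge_zero_neg_one, Sym2.mk_isDiag_iff]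
    exact h.natCast_ne_zero.symm
  · rw [raiseEdge_of_lt h.lt ha hb, Sym2.mk_isDiag_iff]
    exact fun h' => G.ne_of_adj hab (add_right_cancel h')
  · rw [raiseEdge_of_le h.pos ha hb, Sym2.mk_isDiag_iff]
    exact G.ne_of_adj hab

lemma IsSplitAt.raise_adj_cases (h : IsSplitAt G k) {x y : ZMod n} (hxy : (raise k G).Adj x y) :
    s(x, y) = s(0, (k : ZMod n)) ∨
      (0 < x.val ∧ x.val ≤ k ∧ 0 < y.val ∧ y.val ≤ k ∧ G.Adj (x - 1) (y - 1)) ∨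
      (k ≤ x.val ∧ k ≤ y.val ∧ G.Adj x y) := by
  obtain ⟨⟨e, he, hexy⟩, -⟩ := (fromEdgeSet_adj _).1 hxy
  induction e using Sym2.ind with | _ a b => ?_
  have hab : G.Adj a b := he
  rcases h.adj_cases hab with hs | ⟨ha, hb⟩ | ⟨ha, hb⟩
  · rw [hs, raiseEdge_zero_neg_one] at hexy
    exact Or.inl hexy.symm
  · rw [raiseEdge_of_lt h.lt ha hb] at hexy
    have hk := h.lt
    have hva := ZMod.val_add_one_of_lt (a := a) (by omega)
    have hvb := ZMod.val_add_one_of_lt (a := b) (by omega)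
    rcases Sym2.eq_iff.1 hexy with ⟨rfl, rfl⟩ | ⟨rfl, rfl⟩
    · exact Or.inr (Or.inl ⟨by omega, by omega, by omega, by omega, by simpa using hab⟩)
    · exact Or.inr (Or.inl ⟨by omega, by omega, by omega, by omega, by simpa using hab.symm⟩)
  · rw [raiseEdge_of_le h.pos ha hb] at hexy
    rcases Sym2.eq_iff.1 hexy with ⟨rfl, rfl⟩ | ⟨rfl, rfl⟩
    · exact Or.inr (Or.inr ⟨ha, hb, hab⟩)
    · exact Or.inr (Or.inr ⟨hb, ha, hab.symm⟩)

lemma IsSplitAt.noncrossing_raise (h : IsSplitAt G k) (hnc : Noncrossing G) :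
    Noncrossing (raise k G) := by
  intro a b c d hab hcd ⟨hac, hcb, hbd⟩
  have hK := h.val_natCast
  have hzero : (0 : ZMod n).val = 0 := ZMod.val_zero
  rcases h.raise_adj_cases hab with hs | ⟨ha, ha', hb, hb', hGab⟩ | ⟨ha, hb, hGab⟩ <;>
  rcases h.raise_adj_cases hcd with hs' | ⟨hc, hc', hd, hd', hGcd⟩ | ⟨hc, hd, hGcd⟩ <;>
  (try rcases Sym2.eq_iff.1 hs with ⟨rfl, rfl⟩ | ⟨rfl, rfl⟩) <;>
  (try rcases Sym2.eq_iff.1 hs' with ⟨rfl, rfl⟩ | ⟨rfl, rfl⟩) <;>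
  try omega
  · have := hnc _ _ _ _ hGab hGcd
    rw [ZMod.val_sub_one_of_pos ha, ZMod.val_sub_one_of_pos hb, ZMod.val_sub_one_of_pos hc,
      ZMod.val_sub_one_of_pos hd] at this
    omega
  · exact hnc _ _ _ _ hGab hGcd ⟨hac, hcb, hbd⟩

lemma IsSplitAt.neighborSet_raise_zero (h : IsSplitAt G k) (hadj : G.Adj 0 (-1)) :
    (raise k G).neighborSet 0 = {(k : ZMod n)} := by
  ext x
  simp only [mem_neighborSet, Set.mem_singleton_iff]
  refine ⟨fun hx => ?_, fun hx => hx ▸ h.raise_adj_zero hadj⟩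
  have hzero : (0 : ZMod n).val = 0 := ZMod.val_zero
  rcases h.raise_adj_cases hx with hs | ⟨h0, -⟩ | ⟨h0, -⟩
  · rcases Sym2.eq_iff.1 hs with ⟨-, rfl⟩ | ⟨h0, -⟩
    · rfl
    · exact absurd h0 (h.raise_adj_zero hadj).ne
  · omega
  · have := h.pos
    omega

lemma IsSplitAt.raise_reachable_add_one (h : IsSplitAt G k) (hc : G.Connected) {v : ZMod n}
    (hv : v.val < k) : (raise k G).Reachable (v + 1) 1 := by
  have hval := ZMod.val_neg_one_of_one_lt (n := n)
  have hk := h.lt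
  have hS : ∀ x ∈ {v : ZMod n | v.val < k}, x ≠ 0 → ∀ y, G.Adj x y →
      y ∈ {v : ZMod n | v.val < k} ∧ (raise k G).Adj (x + 1) (y + 1) := by
    intro x hx hx0 y hxy
    rcases h.adj_cases hxy with hs | ⟨-, hy⟩ | ⟨hx', -⟩
    · rcases Sym2.eq_iff.1 hs with ⟨rfl, -⟩ | ⟨rfl, -⟩
      · exact absurd rfl hx0
      · exact absurd hx (by simp only [Set.mem_ofPred_eq]; omega)
    · exact ⟨hy, (fromEdgeSet_adj _).2
        ⟨⟨_, hxy, raiseEdge_of_lt hk hx hy⟩, fun e => G.ne_of_adj hxy (add_right_cancel e)⟩⟩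
    · exact absurd hx (by simp only [Set.mem_ofPred_eq]; omega)
  simpa using (hc.preconnected v 0).map_of_adj_until (· + 1) hS hv

lemma IsSplitAt.connected_raise (h : IsSplitAt G k) (hc : G.Connected) (hadj : G.Adj 0 (-1)) :
    (raise k G).Connected := by
  have hK := h.val_natCast
  have hk0 := h.pos
  have hK1 : (raise k G).Reachable k 1 := by
    simpa using h.raise_reachable_add_one hc (v := (k : ZMod n) - 1)
      (by rw [ZMod.val_sub_one_of_pos (by omega)]; omega)
  suffices hall : ∀ v, (raise k G).Reachable v k from ⟨fun u v => (hall u).trans (hall v).symm⟩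
  intro v
  by_cases hv0 : v = 0
  · exact hv0 ▸ (h.raise_adj_zero hadj).reachable
  by_cases hvk : v.val ≤ k
  · have hv := ZMod.val_pos.2 hv0
    have := h.raise_reachable_add_one hc (v := v - 1)
      (by rw [ZMod.val_sub_one_of_pos hv]; omega)
    rw [sub_add_cancel] at this
    exact this.trans hK1.symm
  · exact (h.raise_reachable_neg_one hc (by omega)).trans
      (h.raise_reachable_neg_one hc hK.ge).symm

lemma IsSplitAt.isTree_raise (h : IsSplitAt G k) (hT : G.IsTree) (hadj : G.Adj 0 (-1)) :
    (raise k G).IsTree :=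
  hT.of_connected_of_edgeSet_eq_image (h.connected_raise hT.connected hadj) h.leftInvOn.injOn
    h.edgeSet_raise

lemma IsSplitAt.lower_raise (h : IsSplitAt G k) : lower k (raise k G) = G := by
  rw [lower, h.edgeSet_raise, h.leftInvOn.image_image, fromEdgeSet_edgeSet]

end Raise

lemma adj_zero_of_neighborSet_zero_eq {m : ZMod n} (hm : G.neighborSet 0 = {m}) : G.Adj 0 m :=
  (mem_neighborSet ..).1 (hm ▸ Set.mem_singleton m)

lemma val_pos_of_neighborSet_zero_eq {m : ZMod n} (hm : G.neighborSet 0 = {m}) : 0 < m.val :=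
  ZMod.val_pos.2 (G.ne_of_adj (adj_zero_of_neighborSet_zero_eq hm)).symm

lemma adj_cases_of_neighborSet_zero_eq [NeZero n] (hnc : Noncrossing G) {m : ZMod n}
    (hm : G.neighborSet 0 = {m}) {a b : ZMod n} (hab : G.Adj a b) :
    s(a, b) = s(0, m) ∨ (0 < a.val ∧ a.val ≤ m.val ∧ 0 < b.val ∧ b.val ≤ m.val) ∨
      (m.val ≤ a.val ∧ m.val ≤ b.val) := by
  have hm0 := adj_zero_of_neighborSet_zero_eq hm
  by_cases ha : a = 0
  · subst ha
    rw [← mem_neighborSet, hm, Set.mem_singleton_iff] at hab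
    exact Or.inl (hab ▸ rfl)
  by_cases hb : b = 0
  · subst hb
    rw [adj_comm, ← mem_neighborSet, hm, Set.mem_singleton_iff] at hab
    exact Or.inl (hab ▸ Sym2.eq_swap)
  have ha' := ZMod.val_pos.2 ha
  have hb' := ZMod.val_pos.2 hb
  have hab' : a.val ≠ b.val := (ZMod.val_injective n).ne (G.ne_of_adj hab)
  have h₁ := hnc 0 m a b hm0 hab
  have h₂ := hnc 0 m b a hm0 hab.symm
  rw [ZMod.val_zero] at h₁ h₂
  omega

section Lower

variable [Fact (1 < n)] {m : ZMod n}

lemma leftInvOn_raiseEdge_lowerEdge (hnc : Noncrossing G) (hm : G.neighborSet 0 = {m}) :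
    Set.LeftInvOn (raiseEdge m.val) (lowerEdge m.val) G.edgeSet := by
  intro e he
  induction e using Sym2.ind with | _ a b => ?_
  have hab : G.Adj a b := he
  have hm0 := val_pos_of_neighborSet_zero_eq hm
  rcases adj_cases_of_neighborSet_zero_eq hnc hm hab with hs | ⟨ha, ha', hb, hb'⟩ | ⟨ha, hb⟩
  · rw [hs, lowerEdge_zero_left, raiseEdge_zero_neg_one, ZMod.natCast_zmod_val]
  · rw [lowerEdge_of_le ha ha' hb hb', raiseEdge_of_lt (ZMod.val_lt m)
      (by rw [ZMod.val_sub_one_of_pos ha]; omega) (by rw [ZMod.val_sub_one_of_pos hb]; omega),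
      sub_add_cancel, sub_add_cancel]
  · rw [lowerEdge_of_ge hm0 ha hb (G.ne_of_adj hab), raiseEdge_of_le hm0 ha hb]

lemma edgeSet_lower (hnc : Noncrossing G) (hm : G.neighborSet 0 = {m}) :
    (lower m.val G).edgeSet = lowerEdge m.val '' G.edgeSet := by
  refine edgeSet_fromEdgeSet_of_forall_not_isDiag ?_
  rintro _ ⟨e, he, rfl⟩
  induction e using Sym2.ind with | _ a b => ?_
  have hab : G.Adj a b := he
  have hm0 := val_pos_of_neighborSet_zero_eq hm
  rcases adj_cases_of_neighborSet_zero_eq hnc hm hab with hs | ⟨ha, ha', hb, hb'⟩ | ⟨ha, hb⟩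
  · rw [hs, lowerEdge_zero_left, Sym2.mk_isDiag_iff]
    exact (neg_ne_zero.2 one_ne_zero).symm
  · rw [lowerEdge_of_le ha ha' hb hb', Sym2.mk_isDiag_iff]
    exact fun h' => G.ne_of_adj hab (sub_left_inj.1 h')
  · rw [lowerEdge_of_ge hm0 ha hb (G.ne_of_adj hab), Sym2.mk_isDiag_iff]
    exact G.ne_of_adj hab

lemma lower_adj_cases (hnc : Noncrossing G) (hm : G.neighborSet 0 = {m}) {x y : ZMod n}
    (hxy : (lower m.val G).Adj x y) :
    s(x, y) = s(0, -1) ∨ (x.val < m.val ∧ y.val < m.val ∧ G.Adj (x + 1) (y + 1)) ∨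
      (m.val ≤ x.val ∧ m.val ≤ y.val ∧ G.Adj x y) := by
  obtain ⟨⟨e, he, hexy⟩, -⟩ := (fromEdgeSet_adj _).1 hxy
  induction e using Sym2.ind with | _ a b => ?_
  have hab : G.Adj a b := he
  have hm0 := val_pos_of_neighborSet_zero_eq hm
  rcases adj_cases_of_neighborSet_zero_eq hnc hm hab with hs | ⟨ha, ha', hb, hb'⟩ | ⟨ha, hb⟩
  · rw [hs, lowerEdge_zero_left] at hexy
    exact Or.inl hexy.symm
  · rw [lowerEdge_of_le ha ha' hb hb'] at hexy
    have hva := ZMod.val_sub_one_of_pos ha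
    have hvb := ZMod.val_sub_one_of_pos hb
    rcases Sym2.eq_iff.1 hexy with ⟨rfl, rfl⟩ | ⟨rfl, rfl⟩
    · exact Or.inr (Or.inl ⟨by omega, by omega, by simpa using hab⟩)
    · exact Or.inr (Or.inl ⟨by omega, by omega, by simpa using hab.symm⟩)
  · rw [lowerEdge_of_ge hm0 ha hb (G.ne_of_adj hab)] at hexy
    rcases Sym2.eq_iff.1 hexy with ⟨rfl, rfl⟩ | ⟨rfl, rfl⟩
    · exact Or.inr (Or.inr ⟨ha, hb, hab⟩)
    · exact Or.inr (Or.inr ⟨hb, ha, hab.symm⟩)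

lemma isSplitAt_lower (hnc : Noncrossing G) (hm : G.neighborSet 0 = {m}) :
    IsSplitAt (lower m.val G) m.val := by
  refine ⟨val_pos_of_neighborSet_zero_eq hm, ZMod.val_lt m, fun a b hab hne => ?_⟩
  rcases lower_adj_cases hnc hm hab with hs | ⟨ha, hb, -⟩ | ⟨ha, hb, -⟩
  · exact absurd hs hne
  · exact iff_of_true ha hb
  · exact iff_of_false (not_lt.2 ha) (not_lt.2 hb)

lemma noncrossing_lower (hnc : Noncrossing G) (hm : G.neighborSet 0 = {m}) :
    Noncrossing (lower m.val G) := by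
  intro a b c d hab hcd ⟨hac, hcb, hbd⟩
  have hval := ZMod.val_neg_one_of_one_lt (n := n)
  have hzero : (0 : ZMod n).val = 0 := ZMod.val_zero
  have hmn := ZMod.val_lt m
  have hdn := ZMod.val_lt d
  rcases lower_adj_cases hnc hm hab with hs | ⟨ha, hb, hGab⟩ | ⟨ha, hb, hGab⟩ <;>
  rcases lower_adj_cases hnc hm hcd with hs' | ⟨hc, hd, hGcd⟩ | ⟨hc, hd, hGcd⟩ <;>
  (try rcases Sym2.eq_iff.1 hs with ⟨rfl, rfl⟩ | ⟨rfl, rfl⟩) <;>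
  (try rcases Sym2.eq_iff.1 hs' with ⟨rfl, rfl⟩ | ⟨rfl, rfl⟩) <;>
  try omega
  · have := hnc _ _ _ _ hGab hGcd
    rw [ZMod.val_add_one_of_lt (by omega), ZMod.val_add_one_of_lt (by omega),
      ZMod.val_add_one_of_lt (by omega), ZMod.val_add_one_of_lt (by omega)] at this
    omega
  · exact hnc _ _ _ _ hGab hGcd ⟨hac, hcb, hbd⟩

lemma lower_adj_zero_neg_one (hm : G.neighborSet 0 = {m}) : (lower m.val G).Adj 0 (-1) :=
  (fromEdgeSet_adj _).2 ⟨⟨_, adj_zero_of_neighborSet_zero_eq hm, lowerEdge_zero_left⟩,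
    (neg_ne_zero.2 one_ne_zero).symm⟩

lemma lower_reachable_sub_one (hnc : Noncrossing G) (hm : G.neighborSet 0 = {m})
    (hc : G.Connected) {v : ZMod n} (hv : 0 < v.val) (hv' : v.val ≤ m.val) :
    (lower m.val G).Reachable (v - 1) (m - 1) := by
  have hS : ∀ x ∈ {v : ZMod n | 0 < v.val ∧ v.val ≤ m.val}, x ≠ m → ∀ y, G.Adj x y →
      y ∈ {v : ZMod n | 0 < v.val ∧ v.val ≤ m.val} ∧ (lower m.val G).Adj (x - 1) (y - 1) := by
    rintro x ⟨hx, hx'⟩ hxm y hxy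
    have hxm' : x.val ≠ m.val := (ZMod.val_injective n).ne hxm
    rcases adj_cases_of_neighborSet_zero_eq hnc hm hxy with hs | ⟨-, -, hy, hy'⟩ | ⟨hmx, -⟩
    · rcases Sym2.eq_iff.1 hs with ⟨rfl, -⟩ | ⟨rfl, -⟩
      · simp at hx
      · exact absurd rfl hxm
    · exact ⟨⟨hy, hy'⟩, (fromEdgeSet_adj _).2 ⟨⟨_, hxy, lowerEdge_of_le hx hx' hy hy'⟩,
        fun e => G.ne_of_adj hxy (sub_left_inj.1 e)⟩⟩
    · omega
  exact (hc.preconnected v m).map_of_adj_until (· - 1) hS ⟨hv, hv'⟩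

lemma lower_reachable_of_le (hnc : Noncrossing G) (hm : G.neighborSet 0 = {m})
    (hc : G.Connected) {v : ZMod n} (hv : m.val ≤ v.val) : (lower m.val G).Reachable v m := by
  have hm0 := val_pos_of_neighborSet_zero_eq hm
  have hS : ∀ x ∈ {v : ZMod n | m.val ≤ v.val}, x ≠ m → ∀ y, G.Adj x y →
      y ∈ {v : ZMod n | m.val ≤ v.val} ∧ (lower m.val G).Adj (id x) (id y) := by
    intro x hx hxm y hxy
    have hxm' : x.val ≠ m.val := (ZMod.val_injective n).ne hxm
    rcases adj_cases_of_neighborSet_zero_eq hnc hm hxy with hs | ⟨-, hx', -, -⟩ | ⟨-, hy⟩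
    · rcases Sym2.eq_iff.1 hs with ⟨rfl, -⟩ | ⟨rfl, -⟩
      · exact absurd hx (by simp only [Set.mem_ofPred_eq, ZMod.val_zero]; omega)
      · exact absurd rfl hxm
    · exact absurd hx (by simp only [Set.mem_ofPred_eq]; omega)
    · exact ⟨hy, (fromEdgeSet_adj _).2
        ⟨⟨_, hxy, lowerEdge_of_ge hm0 hx hy (G.ne_of_adj hxy)⟩, G.ne_of_adj hxy⟩⟩
  exact (hc.preconnected v m).map_of_adj_until id hS hv

lemma connected_lower (hnc : Noncrossing G) (hm : G.neighborSet 0 = {m}) (hc : G.Connected) :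
    (lower m.val G).Connected := by
  have hm0 := val_pos_of_neighborSet_zero_eq hm
  have hmn := ZMod.val_lt m
  have hbridge : (lower m.val G).Reachable (m - 1) m := by
    have h0 := lower_reachable_sub_one hnc hm hc (v := 1) (by rw [ZMod.val_one]; omega)
      (by rw [ZMod.val_one]; omega)
    rw [sub_self] at h0
    exact h0.symm.trans ((lower_adj_zero_neg_one hm).reachable.trans
      (lower_reachable_of_le hnc hm hc (by rw [ZMod.val_neg_one_of_one_lt]; omega)))
  suffices hall : ∀ v, (lower m.val G).Reachable v m from
    ⟨fun u v => (hall u).trans (hall v).symm⟩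
  intro v
  by_cases hv : v.val < m.val
  · have hv1 := ZMod.val_add_one_of_lt (a := v) (by omega)
    have := lower_reachable_sub_one hnc hm hc (v := v + 1) (by omega) (by omega)
    rw [add_sub_cancel_right] at this
    exact this.trans hbridge
  · exact lower_reachable_of_le hnc hm hc (by omega)

lemma isTree_lower (hT : G.IsTree) (hnc : Noncrossing G) (hm : G.neighborSet 0 = {m}) :
    (lower m.val G).IsTree :=
  hT.of_connected_of_edgeSet_eq_image (connected_lower hnc hm hT.connected)
    (leftInvOn_raiseEdge_lowerEdge hnc hm).injOn (edgeSet_lower hnc hm)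

lemma raise_lower (hnc : Noncrossing G) (hm : G.neighborSet 0 = {m}) :
    raise m.val (lower m.val G) = G := by
  rw [raise, edgeSet_lower hnc hm, (leftInvOn_raiseEdge_lowerEdge hnc hm).image_image,
    fromEdgeSet_edgeSet]

end Lower

section Bijection

variable [Fact (1 < n)]

noncomputable def raiseAtSplit (G : {G : SimpleGraph (ZMod n) // IsNCTree G ∧ G.Adj 0 (-1)}) :
    {G : SimpleGraph (ZMod n) // IsNCTree G ∧ (G.neighborSet 0).ncard = 1} :=
  ⟨raise (splitPoint G.1) G.1, by
    obtain ⟨G, ⟨hT, hnc⟩, hadj⟩ := G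
    have h := isSplitAt_splitPoint hT hnc hadj
    exact ⟨⟨h.isTree_raise hT hadj, h.noncrossing_raise hnc⟩,
      by rw [h.neighborSet_raise_zero hadj, Set.ncard_singleton]⟩⟩

lemma raiseAtSplit_injective : Function.Injective (raiseAtSplit (n := n)) := by
  rintro ⟨G, ⟨hT, hnc⟩, hadj⟩ ⟨G', ⟨hT', hnc'⟩, hadj'⟩ hGG'
  have h := isSplitAt_splitPoint hT hnc hadj
  have h' := isSplitAt_splitPoint hT' hnc' hadj'
  have heq : raise (splitPoint G) G = raise (splitPoint G') G' := congrArg Subtype.val hGG'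
  have hK : ((splitPoint G : ℕ) : ZMod n) = splitPoint G' := by
    rw [← Set.singleton_eq_singleton_iff, ← h.neighborSet_raise_zero hadj,
      ← h'.neighborSet_raise_zero hadj', heq]
  have hk : splitPoint G = splitPoint G' := by
    simpa [h.val_natCast, h'.val_natCast] using congrArg ZMod.val hK
  refine Subtype.ext ?_
  calc G = lower (splitPoint G) (raise (splitPoint G) G) := h.lower_raise.symm
    _ = lower (splitPoint G') (raise (splitPoint G') G') := by rw [heq, hk]
    _ = G' := h'.lower_raise

lemma raiseAtSplit_surjective : Function.Surjective (raiseAtSplit (n := n)) := by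
  rintro ⟨H, ⟨hT, hnc⟩, hcard⟩
  obtain ⟨m, hm⟩ := Set.ncard_eq_one.1 hcard
  have hT' := isTree_lower hT hnc hm
  refine ⟨⟨lower m.val H, ⟨hT', noncrossing_lower hnc hm⟩, lower_adj_zero_neg_one hm⟩,
    Subtype.ext ?_⟩
  change raise (splitPoint _) _ = H
  rw [splitPoint_eq hT'.connected (isSplitAt_lower hnc hm), raise_lower hnc hm]

end Bijection

end NCTree

theorem card_ncTrees_with_edge_one_n (n : ℕ) (hn : 2 ≤ n) :
    Nat.card {G : SimpleGraph (ZMod n) //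
        IsNCTree G ∧ G.Adj 0 ((n - 1 : ℕ) : ZMod n)} = A₁ n := by
  have : Fact (1 < n) := ⟨hn⟩
  rw [ZMod.natCast_sub_one_eq_neg_one, A₁]
  exact Nat.card_congr (Equiv.ofBijective _
    ⟨NCTree.raiseAtSplit_injective, NCTree.raiseAtSplit_surjective⟩)
end
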